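/- arXiv:1707.05966 — 4 statements merged into one kernel-verified Lean document; each statement's English description precedes it below -/
import Mathlib

section
/- Let n ≥ 1. There exists a constant C ≥ 1 such that for every ball B = B(c_B, r_B) ⊂ ℝ^n (center c_B ∈ ℝ^n, radius r_B > 0), C^{-1} · |B|/(log(e + 1/|B|) + sup_{x ∈ B} log(e+|x|)) ≤ ‖χ_B‖_{L^{Φ_1}} ≤ C · |B|/(log(e + 1/|B|) + sup_{x ∈ B} log(e+|x|)), and moreover C^{-1} · |B|/(|log r_B| + log(e+|c_B|)) ≤ ‖χ_B‖_{L^{Φ_1}} ≤ C · |B|/(|log r_B| + log(e+|c_B|)), where |B| denotes the Lebesgue measure of B. -/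
open MeasureTheory Real
open scoped ENNReal Classical

noncomputable section

/-- `ℝⁿ` as a Euclidean space. -/
abbrev Rn (n : ℕ) := EuclideanSpace ℝ (Fin n)

/-- The Musielak-Orlicz growth function `Φ_p`. -/
def Phi (n : ℕ) (p : ℝ) (x : Rn n) (t : ℝ) : ℝ :=
  if ∃ k : ℕ, (n : ℝ) * (1 / p - 1) = (k : ℝ) then
    t / (Real.log (Real.exp 1 + t) +
      (t * (1 + ‖x‖) ^ (n : ℝ)) ^ (1 - p) * (Real.log (Real.exp 1 + ‖x‖)) ^ p)
  else
    t / (Real.log (Real.exp 1 + t) + (t * (1 + ‖x‖) ^ (n : ℝ)) ^ (1 - p))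

/-- The Orlicz function `φ₀(t) = t / log(e+t)`. -/
def phi0 (t : ℝ) : ℝ := t / Real.log (Real.exp 1 + t)

/-- The weight `W_p`. -/
def Wp (n : ℕ) (p : ℝ) (x : Rn n) : ℝ :=
  if p = 1 then 1 / Real.log (Real.exp 1 + ‖x‖)
  else if ∃ k : ℕ, (n : ℝ) * (1 / p - 1) = (k : ℝ) then
    (1 + ‖x‖) ^ (-(n : ℝ) * (1 - p)) * (Real.log (Real.exp 1 + ‖x‖)) ^ (-p)
  else (1 + ‖x‖) ^ (-(n : ℝ) * (1 - p))

/-- Extension of `Φ_p(x, ·)` to `ℝ≥0∞`. -/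
def PhiE (n : ℕ) (p : ℝ) (x : Rn n) (t : ℝ≥0∞) : ℝ≥0∞ :=
  if t = ⊤ then ⊤ else ENNReal.ofReal (Phi n p x t.toReal)

/-- Extension of `φ₀` to `ℝ≥0∞`. -/
def phi0E (t : ℝ≥0∞) : ℝ≥0∞ :=
  if t = ⊤ then ⊤ else ENNReal.ofReal (phi0 t.toReal)

/-- The Luxemburg quasi-norm `‖·‖_{L^{Φ_p}}`. -/
def luxPhiNorm (n : ℕ) (p : ℝ) (F : Rn n → ℝ≥0∞) : ℝ≥0∞ :=
  sInf {lam : ℝ≥0∞ | 0 < lam ∧ (∫⁻ x : Rn n, PhiE n p x (F x / lam)) ≤ 1}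

/-- The Luxemburg norm `‖·‖_{L^{φ₀}}`. -/
def luxPhi0Norm (n : ℕ) (F : Rn n → ℝ≥0∞) : ℝ≥0∞ :=
  sInf {lam : ℝ≥0∞ | 0 < lam ∧ (∫⁻ x : Rn n, phi0E (F x / lam)) ≤ 1}

/-- The weighted quasi-norm `‖·‖_{L^p_{W_p}}`. -/
def wNorm (n : ℕ) (p : ℝ) (F : Rn n → ℝ≥0∞) : ℝ≥0∞ :=
  (∫⁻ x : Rn n, F x ^ p * ENNReal.ofReal (Wp n p x)) ^ (1 / p)

/-- The weighted norm `‖·‖_{L^1_{W_1}}`. -/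
def w1Norm (n : ℕ) (F : Rn n → ℝ≥0∞) : ℝ≥0∞ :=
  ∫⁻ x : Rn n, F x * ENNReal.ofReal (Wp n 1 x)

/-- The characteristic function of a set, `ℝ≥0∞`-valued. -/
def chi (n : ℕ) (B : Set (Rn n)) : Rn n → ℝ≥0∞ := B.indicator fun _ => 1

/-! For `B = B(c, r)` and `s = 1/λ`, the modular of `χ_B/λ` is
`∫_B s / (log(e+s) + log(e+|x|)) dx`. Bounding `log(e+|x|)` above by `L = log(e+|c|+r)`
shows that every admissible `λ` is `≳ |B| / (log(e+1/|B|) + L)`. Conversely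
`log(e+|x|) ≥ L/2` outside a ball `B(0, ρ)` whose intersection with `B` is negligible
(`ρ = |c| - r` if `B` is far from the origin, `ρ = 0` if `B` is small, `ρ = √(3r)` otherwise),
so the modular is at most `K s |B| / (log(e+s) + L)` with `K = 4·3ⁿ`. By Bernoulli's inequality
`(e+s)^K ≥ e + K²s`, hence the level `λ = K² |B| / (log(e+1/|B|) + L)` is admissible.
Finally both expressions in the theorem are comparable to `|B| / (log(e+1/|B|) + L)`:
the supremum lies between `L/2` and `L`, and `|B| = rⁿ|B(0,1)|` relates `log(e+1/|B|)`
to `n |log r|`. -/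

open Metric

lemma one_le_log_exp_one_add {t : ℝ} (ht : 0 ≤ t) : 1 ≤ Real.log (Real.exp 1 + t) := by
  rw [Real.le_log_iff_exp_le (by positivity)]
  linarith

lemma log_exp_one_add_mono {s t : ℝ} (hs : 0 ≤ s) (hst : s ≤ t) :
    Real.log (Real.exp 1 + s) ≤ Real.log (Real.exp 1 + t) :=
  Real.log_le_log (by positivity) (by linarith)

lemma log_exp_one_add_mul_le {a b : ℝ} (ha : 0 ≤ a) (hb : 0 ≤ b) :
    Real.log (Real.exp 1 + a * b) ≤
      Real.log (Real.exp 1 + a) + Real.log (Real.exp 1 + b) := by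
  have he : 1 ≤ Real.exp 1 := Real.one_le_exp zero_le_one
  rw [← Real.log_mul (by positivity) (by positivity)]
  exact Real.log_le_log (by positivity) (by nlinarith)

lemma log_exp_one_add_add_le {a b : ℝ} (ha : 0 ≤ a) (hb : 0 ≤ b) :
    Real.log (Real.exp 1 + (a + b)) ≤
      Real.log (Real.exp 1 + a) + Real.log (Real.exp 1 + b) := by
  have he : 1 ≤ Real.exp 1 := Real.one_le_exp zero_le_one
  rw [← Real.log_mul (by positivity) (by positivity)]
  exact Real.log_le_log (by positivity) (by nlinarith)

lemma log_exp_one_add_le_two_mul {t ρ : ℝ} (ht : 0 ≤ t)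
    (h : Real.exp 1 + t ≤ (Real.exp 1 + ρ) ^ 2) :
    Real.log (Real.exp 1 + t) ≤ 2 * Real.log (Real.exp 1 + ρ) := by
  rw [show (2 : ℝ) = (2 : ℕ) by norm_num, ← Real.log_pow]
  exact Real.log_le_log (by positivity) h

lemma log_exp_one_add_le_one_add_div {u : ℝ} (hu : 0 ≤ u) :
    Real.log (Real.exp 1 + u) ≤ 1 + u / Real.exp 1 := by
  have he := Real.exp_pos 1
  have h := Real.log_le_sub_one_of_pos (x := 1 + u / Real.exp 1) (by positivity)
  rw [show Real.exp 1 + u = Real.exp 1 * (1 + u / Real.exp 1) by field_simp,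
    Real.log_mul he.ne' (by positivity), Real.log_exp]
  linarith

lemma log_exp_one_add_pow_le {u : ℝ} (hu : 0 ≤ u) {n : ℕ} (hn : 1 ≤ n) :
    Real.log (Real.exp 1 + u ^ n) ≤ n * Real.log (Real.exp 1 + u) := by
  have he : 1 ≤ Real.exp 1 := Real.one_le_exp zero_le_one
  rw [← Real.log_pow]
  refine Real.log_le_log (by positivity) ?_
  have := pow_add_pow_le (by positivity) hu (by omega : n ≠ 0) (x := Real.exp 1)
  have := le_self_pow₀ he (by omega : n ≠ 0)
  linarith

lemma log_exp_one_add_le_add_abs_log {u : ℝ} (hu : 0 < u) :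
    Real.log (Real.exp 1 + u) ≤ Real.log (Real.exp 1 + 1) + |Real.log u| := by
  rcases le_total u 1 with h | h
  · linarith [log_exp_one_add_mono hu.le h, abs_nonneg (Real.log u)]
  · have he : 1 ≤ Real.exp 1 := Real.one_le_exp zero_le_one
    have : Real.log (Real.exp 1 + u) ≤ Real.log ((Real.exp 1 + 1) * u) :=
      Real.log_le_log (by positivity) (by nlinarith)
    rw [Real.log_mul (by positivity) hu.ne'] at this
    linarith [le_abs_self (Real.log u)]

lemma abs_log_le_log_exp_one_add_add {r : ℝ} (hr : 0 < r) {n : ℕ} (hn : 1 ≤ n) :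
    |Real.log r| ≤ Real.log (Real.exp 1 + r) + Real.log (Real.exp 1 + (1 / r) ^ n) := by
  have h1 := one_le_log_exp_one_add hr.le
  have h2 := one_le_log_exp_one_add (by positivity : 0 ≤ (1 / r) ^ n)
  rcases le_total 1 r with h | h
  · rw [abs_of_nonneg (Real.log_nonneg h)]
    linarith [Real.log_le_log hr (by linarith [Real.exp_pos 1] : r ≤ Real.exp 1 + r)]
  · rw [abs_of_nonpos (Real.log_nonpos hr.le h), ← Real.log_inv, ← one_div]
    have : 1 / r ≤ (1 / r) ^ n := le_self_pow₀ (by rw [le_div_iff₀ hr]; linarith) (by omega)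
    linarith [Real.log_le_log (by positivity) (by linarith [Real.exp_pos 1] :
      1 / r ≤ Real.exp 1 + (1 / r) ^ n)]

lemma log_exp_one_add_sq_mul_le {K : ℕ} (hK : 1 ≤ K) {s : ℝ} (hs : 0 ≤ s) :
    Real.log (Real.exp 1 + K ^ 2 * s) ≤ K * Real.log (Real.exp 1 + s) := by
  obtain ⟨m, rfl⟩ := Nat.exists_eq_add_of_le' hK
  have he := Real.exp_pos 1
  have hpow : Real.exp 1 + ((m + 1 : ℕ) : ℝ) ^ 2 * s ≤ (Real.exp 1 + s) ^ (m + 1) := by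
    have hbern := one_add_mul_le_pow (a := s / Real.exp 1) (by linarith [div_nonneg hs he.le])
      (m + 1)
    have hm : ((m + 1 : ℕ) : ℝ) ≤ Real.exp 1 ^ m := by
      rw [Real.exp_one_pow]; push_cast; linarith [Real.add_one_le_exp m]
    have h1 : 1 ≤ Real.exp 1 ^ m := one_le_pow₀ (Real.one_le_exp zero_le_one)
    calc Real.exp 1 + ((m + 1 : ℕ) : ℝ) ^ 2 * s
        ≤ Real.exp 1 ^ m * (Real.exp 1 * (1 + (m + 1 : ℕ) * (s / Real.exp 1))) := by
          field_simp
          nlinarith [mul_nonneg (sub_nonneg.2 hm) (mul_nonneg (Nat.cast_nonneg (m + 1)) hs)]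
      _ ≤ Real.exp 1 ^ m * (Real.exp 1 * (1 + s / Real.exp 1) ^ (m + 1)) := by gcongr
      _ = (Real.exp 1 + s) ^ (m + 1) := by
          rw [← mul_assoc, ← pow_succ, ← mul_pow, mul_add, mul_one, mul_div_cancel₀ _ he.ne']
  rw [← Real.log_pow]
  exact Real.log_le_log (by positivity) hpow

lemma log_exp_one_add_three_le_two : Real.log (Real.exp 1 + 3) ≤ 2 := by
  rw [Real.log_le_iff_le_exp (by positivity), show (2:ℝ) = 1 + 1 by norm_num, Real.exp_add]
  nlinarith [Real.exp_one_gt_d9]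

lemma Phi_one (n : ℕ) (x : Rn n) (t : ℝ) :
    Phi n 1 x t = t / (Real.log (Real.exp 1 + t) + Real.log (Real.exp 1 + ‖x‖)) := by
  rw [Phi, if_pos ⟨0, by norm_num⟩]
  norm_num

lemma lintegral_PhiE_chi_div (n : ℕ) {B : Set (Rn n)} (hB : MeasurableSet B) {l : ℝ}
    (hl : 0 < l) :
    ∫⁻ x, PhiE n 1 x (chi n B x / ENNReal.ofReal l) =
      ∫⁻ x in B, ENNReal.ofReal
        (l⁻¹ / (Real.log (Real.exp 1 + l⁻¹) + Real.log (Real.exp 1 + ‖x‖))) := by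
  rw [← lintegral_indicator hB]
  congr 1 with x
  by_cases hx : x ∈ B
  · rw [Set.indicator_of_mem hx, chi, Set.indicator_of_mem hx, one_div,
      ← ENNReal.ofReal_inv_of_pos hl, PhiE, if_neg ENNReal.ofReal_ne_top,
      ENNReal.toReal_ofReal (by positivity), Phi_one]
  · simp [Set.indicator_of_notMem hx, chi, PhiE, Phi_one]

lemma log_le_of_mem_ball {F : Type*} [SeminormedAddCommGroup F] {c x : F} {r : ℝ}
    (hx : x ∈ ball c r) :
    Real.log (Real.exp 1 + ‖x‖) ≤ Real.log (Real.exp 1 + (‖c‖ + r)) :=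
  log_exp_one_add_mono (norm_nonneg x) (norm_lt_of_mem_ball hx).le

lemma iSup_ball_log_le {F : Type*} [SeminormedAddCommGroup F] (c : F) {r : ℝ} (hr : 0 < r) :
    ⨆ x : ball c r, Real.log (Real.exp 1 + ‖(x : F)‖) ≤ Real.log (Real.exp 1 + (‖c‖ + r)) :=
  have : Nonempty (ball c r) := ⟨⟨c, mem_ball_self hr⟩⟩
  ciSup_le fun x => log_le_of_mem_ball x.2

section Balls

variable {E : Type*} [NormedAddCommGroup E] [MeasurableSpace E] [OpensMeasurableSpace E]

lemma setLIntegral_ball_le_add (μ : Measure E) (c : E) (r : ℝ) {ρ s a : ℝ} (hρ : 0 ≤ ρ)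
    (hs : 0 ≤ s) (ha : 0 ≤ a)
    (hcr : Real.exp 1 + (‖c‖ + r) ≤ (Real.exp 1 + ρ) ^ 2) :
    ∫⁻ x in ball c r, ENNReal.ofReal (s / (a + Real.log (Real.exp 1 + ‖x‖))) ∂μ ≤
      ENNReal.ofReal (2 * s / (a + Real.log (Real.exp 1 + (‖c‖ + r)))) * μ (ball c r) +
        ENNReal.ofReal (s / (a + 1)) * μ (ball 0 ρ ∩ ball c r) := by
  have hpt : ∀ x ∈ ball c r,
      ENNReal.ofReal (s / (a + Real.log (Real.exp 1 + ‖x‖))) ≤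
        ENNReal.ofReal (2 * s / (a + Real.log (Real.exp 1 + (‖c‖ + r)))) +
          (ball (0 : E) ρ).indicator (fun _ => ENNReal.ofReal (s / (a + 1))) x := by
    intro x hx
    have hℓ := one_le_log_exp_one_add (norm_nonneg x)
    by_cases hxρ : ‖x‖ < ρ
    · rw [Set.indicator_of_mem (mem_ball_zero_iff.2 hxρ)]
      refine le_add_left (ENNReal.ofReal_le_ofReal ?_)
      gcongr
    · rw [Set.indicator_of_notMem (by simpa using hxρ), add_zero]
      have hR : 0 ≤ ‖c‖ + r := (norm_nonneg x).trans (norm_lt_of_mem_ball hx).le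
      have hL := (log_exp_one_add_le_two_mul hR hcr).trans
        (mul_le_mul_of_nonneg_left (log_exp_one_add_mono hρ (not_lt.1 hxρ)) zero_le_two)
      refine ENNReal.ofReal_le_ofReal ?_
      rw [div_le_div_iff₀ (by linarith) (by linarith [one_le_log_exp_one_add hR])]
      nlinarith
  calc _ ≤ ∫⁻ x in ball c r,
          ENNReal.ofReal (2 * s / (a + Real.log (Real.exp 1 + (‖c‖ + r)))) +
            (ball (0 : E) ρ).indicator (fun _ => ENNReal.ofReal (s / (a + 1))) x ∂μ :=
        setLIntegral_mono' measurableSet_ball hpt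
    _ = _ := by
        rw [lintegral_add_left measurable_const, setLIntegral_const,
          lintegral_indicator_const measurableSet_ball, Measure.restrict_apply measurableSet_ball]

lemma ofReal_mul_measure_ball_le_setLIntegral (μ : Measure E) (c : E) (r : ℝ) {s a : ℝ}
    (hs : 0 ≤ s) (ha : 0 ≤ a) :
    ENNReal.ofReal (s / (a + Real.log (Real.exp 1 + (‖c‖ + r)))) * μ (ball c r) ≤
      ∫⁻ x in ball c r, ENNReal.ofReal (s / (a + Real.log (Real.exp 1 + ‖x‖))) ∂μ := by
  rw [← setLIntegral_const]
  refine setLIntegral_mono' measurableSet_ball fun x hx => ENNReal.ofReal_le_ofReal ?_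
  have hℓ := one_le_log_exp_one_add (norm_nonneg x)
  have hℓL := log_le_of_mem_ball hx
  gcongr

end Balls

lemma toReal_volume_ball {n : ℕ} (hn : 1 ≤ n) (c : Rn n) {r : ℝ} (hr : 0 ≤ r) :
    (volume (ball c r)).toReal = r ^ n * (volume (ball (0 : Rn n) 1)).toReal := by
  have : Nonempty (Fin n) := ⟨⟨0, hn⟩⟩
  rw [Measure.addHaar_ball volume c hr, finrank_euclideanSpace_fin, ENNReal.toReal_mul,
    ENNReal.toReal_ofReal (by positivity)]

lemma toReal_volume_ball_pos (n : ℕ) (c : Rn n) {r : ℝ} (hr : 0 < r) :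
    0 < (volume (ball c r)).toReal :=
  ENNReal.toReal_pos (measure_ball_pos volume c hr).ne' measure_ball_lt_top.ne

lemma add_mul_sqrt_pow_le {n : ℕ} (hn : 1 ≤ n) {r a L : ℝ} (hr : 1 ≤ r) (ha : 0 ≤ a)
    (hL1 : 1 ≤ L) (hL : L ≤ Real.log (Real.exp 1 + 3 * r)) :
    (a + L) * √(3 * r) ^ n ≤ 2 * 3 ^ n * (a + 1) * r ^ n := by
  set t := √r with ht
  have ht1 : 1 ≤ t := Real.one_le_sqrt.2 hr
  have hrt : r = t ^ 2 := (Real.sq_sqrt (by linarith)).symm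
  have hLt : L ≤ 2 * t ^ n := by
    have he : 0 < Real.exp 1 := Real.exp_pos 1
    have hlog : Real.log (Real.exp 1 + 3 * r) ≤ Real.log (Real.exp 1 + 3) + 2 * Real.log t := by
      rw [show (2 : ℝ) * Real.log t = Real.log (t ^ 2) by simp [Real.log_pow],
        ← Real.log_mul (by positivity) (by positivity)]
      exact Real.log_le_log (by positivity) (by rw [← hrt]; nlinarith)
    linarith [log_exp_one_add_three_le_two, Real.log_le_sub_one_of_pos (by linarith : 0 < t),
      le_self_pow₀ ht1 (by omega : n ≠ 0)]
  have h3 : √3 ^ n ≤ 3 ^ n :=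
    pow_le_pow_left₀ (Real.sqrt_nonneg 3) (Real.sqrt_le_iff.2 ⟨by norm_num, by norm_num⟩) n
  have htn : 1 ≤ t ^ n := one_le_pow₀ ht1
  rw [Real.sqrt_mul (by norm_num), ← ht, mul_pow, hrt, ← pow_mul, mul_comm 2 n, pow_mul, sq]
  calc (a + L) * (√3 ^ n * t ^ n) ≤ (a + 1) * L * (√3 ^ n * t ^ n) := by
        gcongr; nlinarith
    _ ≤ (a + 1) * (2 * t ^ n) * (3 ^ n * t ^ n) := by gcongr
    _ = _ := by ring

lemma setLIntegral_ball_le_of_volume_inter_le {n : ℕ} (c : Rn n) {r : ℝ} (hr : 0 < r)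
    (ρ M : ℝ) {s a : ℝ} (hρ : 0 ≤ ρ) (hM : 0 ≤ M) (hs : 0 ≤ s) (ha : 0 ≤ a)
    (hcr : Real.exp 1 + (‖c‖ + r) ≤ (Real.exp 1 + ρ) ^ 2)
    (hvol : volume (ball 0 ρ ∩ ball c r) ≤ ENNReal.ofReal M)
    (hML : (a + Real.log (Real.exp 1 + (‖c‖ + r))) * M ≤
      2 * 3 ^ n * (a + 1) * (volume (ball c r)).toReal) :
    ∫⁻ x in ball c r, ENNReal.ofReal (s / (a + Real.log (Real.exp 1 + ‖x‖))) ≤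
      ENNReal.ofReal (4 * 3 ^ n * s * (volume (ball c r)).toReal /
        (a + Real.log (Real.exp 1 + (‖c‖ + r)))) := by
  set L := Real.log (Real.exp 1 + (‖c‖ + r))
  set v := (volume (ball c r)).toReal
  have hv : 0 ≤ v := ENNReal.toReal_nonneg
  have hL : 1 ≤ L := one_le_log_exp_one_add (by positivity)
  have h3n : (1 : ℝ) ≤ 3 ^ n := one_le_pow₀ (by norm_num)
  refine (setLIntegral_ball_le_add volume c r hρ hs ha hcr).trans ?_
  rw [← ENNReal.ofReal_toReal (measure_ball_lt_top (μ := volume) (x := c) (r := r)).ne]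
  calc _ ≤ ENNReal.ofReal (2 * s / (a + L)) * ENNReal.ofReal v +
        ENNReal.ofReal (s / (a + 1)) * ENNReal.ofReal M := by gcongr
    _ = ENNReal.ofReal (2 * s / (a + L) * v + s / (a + 1) * M) := by
        rw [← ENNReal.ofReal_mul (by positivity), ← ENNReal.ofReal_mul (by positivity),
          ENNReal.ofReal_add (by positivity) (by positivity)]
    _ ≤ _ := by
        refine ENNReal.ofReal_le_ofReal ?_
        have hsM : s / (a + 1) * M ≤ 2 * 3 ^ n * s * v / (a + L) := by
          rw [div_mul_eq_mul_div, div_le_div_iff₀ (by linarith) (by linarith)]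
          nlinarith [mul_le_mul_of_nonneg_left hML hs]
        have hsv : 2 * s / (a + L) * v ≤ 2 * 3 ^ n * s * v / (a + L) := by
          rw [div_mul_eq_mul_div]
          gcongr
          nlinarith [mul_nonneg hs hv]
        linarith [show 4 * 3 ^ n * s * v / (a + L) =
          2 * 3 ^ n * s * v / (a + L) + 2 * 3 ^ n * s * v / (a + L) by ring]

lemma setLIntegral_ball_le {n : ℕ} (hn : 1 ≤ n) (c : Rn n) {r : ℝ} (hr : 0 < r) {s a : ℝ}
    (hs : 0 ≤ s) (ha : 0 ≤ a) :
    ∫⁻ x in ball c r, ENNReal.ofReal (s / (a + Real.log (Real.exp 1 + ‖x‖))) ≤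
      ENNReal.ofReal (4 * 3 ^ n * s * (volume (ball c r)).toReal /
        (a + Real.log (Real.exp 1 + (‖c‖ + r)))) := by
  have he := Real.exp_one_gt_d9
  have hv : 0 ≤ (volume (ball c r)).toReal := ENNReal.toReal_nonneg
  rcases le_total (2 * r) ‖c‖ with hfar | hnear
  · have hdisj : ball (0 : Rn n) (‖c‖ - r) ∩ ball c r = ∅ :=
      Set.eq_empty_iff_forall_notMem.2 fun x ⟨hx0, hxc⟩ => by
        linarith [mem_ball_zero_iff.1 hx0, mem_ball_iff_norm'.1 hxc, norm_sub_norm_le c x]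
    exact setLIntegral_ball_le_of_volume_inter_le c hr (‖c‖ - r) 0 (by linarith) le_rfl hs ha
      (by nlinarith) (by simp [hdisj]) (by rw [mul_zero]; positivity)
  rcases le_total r 1 with hsmall | hlarge
  · refine setLIntegral_ball_le_of_volume_inter_le c hr 0 0 le_rfl le_rfl hs ha ?_ (by simp)
      (by rw [mul_zero]; positivity)
    nlinarith [log_exp_one_add_three_le_two]
  · have hρ : √(3 * r) ^ 2 = 3 * r := Real.sq_sqrt (by linarith)
    refine setLIntegral_ball_le_of_volume_inter_le c hr √(3 * r)
      (√(3 * r) ^ n * (volume (ball (0 : Rn n) 1)).toReal) (Real.sqrt_nonneg _) (by positivity)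
      hs ha (by nlinarith [Real.sqrt_nonneg (3 * r)]) ?_ ?_
    · rw [← toReal_volume_ball hn 0 (Real.sqrt_nonneg _),
        ENNReal.ofReal_toReal measure_ball_lt_top.ne]
      exact measure_mono Set.inter_subset_left
    · have hL := add_mul_sqrt_pow_le hn hlarge ha (one_le_log_exp_one_add (by positivity))
        (log_exp_one_add_mono (by positivity) (by linarith) :
          Real.log (Real.exp 1 + (‖c‖ + r)) ≤ _)
      rw [toReal_volume_ball hn c hr.le, ← mul_assoc, ← mul_assoc]
      gcongr

lemma luxPhiNorm_chi_ball_le {n : ℕ} (hn : 1 ≤ n) (c : Rn n) {r : ℝ} (hr : 0 < r) :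
    luxPhiNorm n 1 (chi n (ball c r)) ≤
      ENNReal.ofReal ((4 * 3 ^ n) ^ 2 * (volume (ball c r)).toReal /
        (Real.log (Real.exp 1 + 1 / (volume (ball c r)).toReal) +
          Real.log (Real.exp 1 + (‖c‖ + r)))) := by
  set v := (volume (ball c r)).toReal
  set E := Real.log (Real.exp 1 + 1 / v)
  set L := Real.log (Real.exp 1 + (‖c‖ + r))
  set K : ℕ := 4 * 3 ^ n with hK
  have hKc : ((K : ℕ) : ℝ) = 4 * 3 ^ n := by rw [hK]; push_cast; rfl
  have hv : 0 < v := toReal_volume_ball_pos n c hr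
  have hE : 1 ≤ E := one_le_log_exp_one_add (by positivity)
  have hL : 1 ≤ L := one_le_log_exp_one_add (by positivity)
  have hK1 : (1 : ℝ) ≤ K := by
    rw [hKc]; linarith [one_le_pow₀ (by norm_num : (1 : ℝ) ≤ 3) (n := n)]
  have hl : 0 < (K : ℝ) ^ 2 * v / (E + L) := by positivity
  rw [← hKc]
  refine sInf_le ⟨ENNReal.ofReal_pos.2 hl, ?_⟩
  rw [lintegral_PhiE_chi_div n measurableSet_ball hl, inv_div]
  set s := (E + L) / (K ^ 2 * v) with hs_def
  have hs : 0 < s := by positivity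
  have hKsv : (K : ℝ) ^ 2 * s * v = E + L := by rw [hs_def]; field_simp
  have ha := one_le_log_exp_one_add hs.le
  refine (setLIntegral_ball_le hn c hr hs.le (by linarith)).trans ?_
  rw [← hKc, ENNReal.ofReal_le_one, div_le_one (by linarith)]
  have hsv : K * s * v = (E + L) / K := by rw [← hKsv]; field_simp
  have hEa : E ≤ K * Real.log (Real.exp 1 + s) := by
    refine (log_exp_one_add_mono (by positivity) ?_).trans
      (log_exp_one_add_sq_mul_le ?_ hs.le)
    · rw [div_le_iff₀ hv, hKsv]; linarith
    · exact_mod_cast hK1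
  rw [hsv, div_le_iff₀ (by linarith)]
  nlinarith

lemma le_luxPhiNorm_chi_ball (n : ℕ) (c : Rn n) {r : ℝ} (hr : 0 < r) :
    ENNReal.ofReal ((volume (ball c r)).toReal /
        (3 * (Real.log (Real.exp 1 + 1 / (volume (ball c r)).toReal) +
          Real.log (Real.exp 1 + (‖c‖ + r))))) ≤
      luxPhiNorm n 1 (chi n (ball c r)) := by
  set v := (volume (ball c r)).toReal
  set E := Real.log (Real.exp 1 + 1 / v)
  set L := Real.log (Real.exp 1 + (‖c‖ + r))
  have hv : 0 < v := toReal_volume_ball_pos n c hr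
  have hE : 1 ≤ E := one_le_log_exp_one_add (by positivity)
  have hL : 1 ≤ L := one_le_log_exp_one_add (by positivity)
  refine le_sInf fun lam ⟨hpos, hint⟩ => ?_
  rcases eq_or_ne lam ⊤ with rfl | htop
  · exact le_top
  have hl : 0 < lam.toReal := ENNReal.toReal_pos hpos.ne' htop
  rw [← ENNReal.ofReal_toReal htop] at hint ⊢
  rw [lintegral_PhiE_chi_div n measurableSet_ball hl] at hint
  set s := lam.toReal⁻¹
  set a := Real.log (Real.exp 1 + s)
  have hs : 0 < s := by positivity
  have ha : 1 ≤ a := one_le_log_exp_one_add hs.le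
  have hsv : s * v ≤ a + L := by
    have := (ofReal_mul_measure_ball_le_setLIntegral volume c r hs.le (by linarith)).trans hint
    rwa [← ENNReal.ofReal_toReal measure_ball_lt_top.ne, ← ENNReal.ofReal_mul (by positivity),
      ENNReal.ofReal_le_one, div_mul_eq_mul_div, div_le_one (by linarith)] at this
  have haE : a ≤ 1 + s * v / 2 + E := by
    have h1 : a ≤ Real.log (Real.exp 1 + s * v) + E := by
      simpa [a, E, mul_assoc, hv.ne'] using log_exp_one_add_mul_le (by positivity : 0 ≤ s * v)
        (by positivity : 0 ≤ 1 / v)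
    have h2 := log_exp_one_add_le_one_add_div (by positivity : 0 ≤ s * v)
    have h3 : s * v / Real.exp 1 ≤ s * v / 2 := by
      gcongr; linarith [Real.exp_one_gt_d9]
    linarith
  refine ENNReal.ofReal_le_ofReal ?_
  rw [div_le_iff₀ (by linarith), ← div_le_iff₀' hl, div_eq_mul_inv, mul_comm]
  linarith

lemma exists_mem_ball_add_half_le_norm {F : Type*} [NormedAddCommGroup F] [NormedSpace ℝ F]
    [Nontrivial F] (c : F) {r : ℝ} (hr : 0 < r) :
    ∃ y ∈ ball c r, ‖c‖ + r / 2 ≤ ‖y‖ := by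
  rcases eq_or_ne c 0 with rfl | hc
  · obtain ⟨y, hy⟩ := exists_norm_eq F (half_pos hr).le
    exact ⟨y, by rw [mem_ball_zero_iff, hy]; linarith, by rw [hy, norm_zero, zero_add]⟩
  · have hc' : 0 < ‖c‖ := norm_pos_iff.2 hc
    have hk : 0 < r / (2 * ‖c‖) := by positivity
    refine ⟨(1 + r / (2 * ‖c‖)) • c, ?_, ?_⟩
    · rw [mem_ball, dist_eq_norm, add_smul, one_smul, add_sub_cancel_left, norm_smul,
        Real.norm_of_nonneg hk.le, div_mul_eq_mul_div, mul_div_mul_right _ _ hc'.ne']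
      linarith
    · rw [norm_smul, Real.norm_of_nonneg (by positivity)]
      field_simp
      rfl

lemma log_le_two_mul_iSup_ball {F : Type*} [NormedAddCommGroup F] [NormedSpace ℝ F]
    [Nontrivial F] (c : F) {r : ℝ} (hr : 0 < r) :
    Real.log (Real.exp 1 + (‖c‖ + r)) ≤
      2 * ⨆ x : ball c r, Real.log (Real.exp 1 + ‖(x : F)‖) := by
  obtain ⟨y, hy, hyc⟩ := exists_mem_ball_add_half_le_norm c hr
  have hbdd : BddAbove (Set.range fun x : ball c r => Real.log (Real.exp 1 + ‖(x : F)‖)) :=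
    ⟨_, Set.forall_mem_range.2 fun x => log_le_of_mem_ball x.2⟩
  have he : 1 ≤ Real.exp 1 := Real.one_le_exp zero_le_one
  calc Real.log (Real.exp 1 + (‖c‖ + r))
      ≤ 2 * Real.log (Real.exp 1 + (‖c‖ + r) / 2) :=
        log_exp_one_add_le_two_mul (by positivity) (by nlinarith [norm_nonneg c])
    _ ≤ 2 * Real.log (Real.exp 1 + ‖y‖) := by
        gcongr
        linarith [norm_nonneg c]
    _ ≤ _ := by gcongr; exact le_ciSup hbdd ⟨y, hy⟩

lemma log_add_log_le_mul_abs_log_add {n : ℕ} (hn : 1 ≤ n) {r w m : ℝ} (hr : 0 < r) (hw : 0 < w)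
    (hm : 0 ≤ m) :
    Real.log (Real.exp 1 + 1 / (r ^ n * w)) + Real.log (Real.exp 1 + (m + r)) ≤
      (Real.log (Real.exp 1 + 1 / w) + (n + 1) * (Real.log (Real.exp 1 + 1) + 1)) *
        (|Real.log r| + Real.log (Real.exp 1 + m)) := by
  have habs : |Real.log (1 / r)| = |Real.log r| := by rw [one_div, Real.log_inv, abs_neg]
  have hE : Real.log (Real.exp 1 + 1 / (r ^ n * w)) ≤
      Real.log (Real.exp 1 + 1 / w) + n * (Real.log (Real.exp 1 + 1) + |Real.log r|) := by
    calc _ = Real.log (Real.exp 1 + 1 / w * (1 / r) ^ n) := by rw [one_div_pow]; field_simp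
      _ ≤ Real.log (Real.exp 1 + 1 / w) + Real.log (Real.exp 1 + (1 / r) ^ n) :=
        log_exp_one_add_mul_le (by positivity) (by positivity)
      _ ≤ Real.log (Real.exp 1 + 1 / w) + n * Real.log (Real.exp 1 + 1 / r) := by
        gcongr; exact log_exp_one_add_pow_le (by positivity) hn
      _ ≤ _ := by
        gcongr; simpa [habs] using log_exp_one_add_le_add_abs_log (by positivity : 0 < 1 / r)
  have hL := (log_exp_one_add_add_le hm hr.le).trans
    (add_le_add_right (log_exp_one_add_le_add_abs_log hr) _)
  have hA := one_le_log_exp_one_add (by positivity : 0 ≤ 1 / w)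
  have hB := one_le_log_exp_one_add zero_le_one
  have hM := one_le_log_exp_one_add hm
  have hn' : (1 : ℝ) ≤ n := by exact_mod_cast hn
  have hG : 0 ≤ |Real.log r| + Real.log (Real.exp 1 + m) - 1 := by
    linarith [abs_nonneg (Real.log r)]
  nlinarith [mul_nonneg (by linarith : 0 ≤ Real.log (Real.exp 1 + 1 / w)) hG,
    mul_nonneg (by positivity : (0 : ℝ) ≤ (n + 1) * Real.log (Real.exp 1 + 1)) hG,
    mul_nonneg (by positivity : (0 : ℝ) ≤ n) (abs_nonneg (Real.log r)),
    mul_nonneg (by positivity : (0 : ℝ) ≤ n) (by linarith : 0 ≤ Real.log (Real.exp 1 + m))]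

lemma abs_log_add_log_le_mul {n : ℕ} (hn : 1 ≤ n) {r w m : ℝ} (hr : 0 < r) (hw : 0 < w)
    (hm : 0 ≤ m) :
    |Real.log r| + Real.log (Real.exp 1 + m) ≤ (Real.log (Real.exp 1 + w) + 2) *
      (Real.log (Real.exp 1 + 1 / (r ^ n * w)) + Real.log (Real.exp 1 + (m + r))) := by
  have hrn : Real.log (Real.exp 1 + (1 / r) ^ n) ≤
      Real.log (Real.exp 1 + w) + Real.log (Real.exp 1 + 1 / (r ^ n * w)) := by
    rw [show (1 / r) ^ n = w * (1 / (r ^ n * w)) by rw [one_div_pow]; field_simp]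
    exact log_exp_one_add_mul_le hw.le (by positivity)
  have h1 := abs_log_le_log_exp_one_add_add hr hn
  have h2 := log_exp_one_add_mono hr.le (by linarith : r ≤ m + r)
  have h3 := log_exp_one_add_mono hm (by linarith : m ≤ m + r)
  have hW := one_le_log_exp_one_add hw.le
  have hE := one_le_log_exp_one_add (by positivity : 0 ≤ 1 / (r ^ n * w))
  have hL := one_le_log_exp_one_add (by positivity : 0 ≤ m + r)
  nlinarith

lemma ofReal_le_and_le_ofReal_of_comparable {N : ℝ≥0∞} {v D D' a b p q C : ℝ} (hv : 0 ≤ v)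
    (hD : 0 < D) (hD' : 0 < D') (ha : 0 < a) (hb : 0 ≤ b)
    (hlow : ENNReal.ofReal (v / (a * D)) ≤ N) (hup : N ≤ ENNReal.ofReal (b * v / D))
    (hp : D ≤ p * D') (hq : D' ≤ q * D) (hap : a * p ≤ C) (hbq : b * q ≤ C) :
    ENNReal.ofReal (C⁻¹ * (v / D')) ≤ N ∧ N ≤ ENNReal.ofReal (C * (v / D')) := by
  have hp0 : 0 < p := pos_of_mul_pos_left (hD.trans_le hp) hD'.le
  have hq0 : 0 ≤ q := nonneg_of_mul_nonneg_left (hD'.le.trans hq) hD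
  have hC : 0 < C := (mul_pos ha hp0).trans_le hap
  refine ⟨le_trans (ENNReal.ofReal_le_ofReal ?_) hlow, hup.trans (ENNReal.ofReal_le_ofReal ?_)⟩
  · rw [inv_mul_eq_div, div_div]
    exact div_le_div_of_nonneg_left hv (by positivity) (by nlinarith)
  · rw [mul_div_assoc', div_le_div_iff₀ hD hD']
    calc b * v * D' ≤ b * v * (q * D) := by gcongr
      _ = b * q * v * D := by ring
      _ ≤ C * v * D := by gcongr

/-- `‖χ_B‖_{L^{Φ_1}} ∼ |B| / (log(e+1/|B|) + sup_{x ∈ B} log(e+|x|))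
∼ |B| / (|log r_B| + log(e+|c_B|))`. -/
theorem statement4 (n : ℕ) (hn : 1 ≤ n) :
    ∃ C : ℝ, 1 ≤ C ∧ ∀ (c : Rn n) (r : ℝ), 0 < r →
      (ENNReal.ofReal (C⁻¹ * ((volume (Metric.ball c r)).toReal /
            (Real.log (Real.exp 1 + 1 / (volume (Metric.ball c r)).toReal) +
              ⨆ x : Metric.ball c r, Real.log (Real.exp 1 + ‖(x : Rn n)‖)))) ≤
          luxPhiNorm n 1 (chi n (Metric.ball c r)) ∧
        luxPhiNorm n 1 (chi n (Metric.ball c r)) ≤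
          ENNReal.ofReal (C * ((volume (Metric.ball c r)).toReal /
            (Real.log (Real.exp 1 + 1 / (volume (Metric.ball c r)).toReal) +
              ⨆ x : Metric.ball c r, Real.log (Real.exp 1 + ‖(x : Rn n)‖))))) ∧
      (ENNReal.ofReal (C⁻¹ * ((volume (Metric.ball c r)).toReal /
            (|Real.log r| + Real.log (Real.exp 1 + ‖c‖)))) ≤
          luxPhiNorm n 1 (chi n (Metric.ball c r)) ∧
        luxPhiNorm n 1 (chi n (Metric.ball c r)) ≤
          ENNReal.ofReal (C * ((volume (Metric.ball c r)).toReal /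
            (|Real.log r| + Real.log (Real.exp 1 + ‖c‖))))) := by
  have : Nonempty (Fin n) := ⟨⟨0, hn⟩⟩
  set w := (volume (ball (0 : Rn n) 1)).toReal
  have hw : 0 < w := toReal_volume_ball_pos n 0 one_pos
  set p := Real.log (Real.exp 1 + 1 / w) + (n + 1) * (Real.log (Real.exp 1 + 1) + 1)
  set q := Real.log (Real.exp 1 + w) + 2
  set b : ℝ := (4 * 3 ^ n) ^ 2
  refine ⟨max (max (3 * 2) (b * 1)) (max (3 * p) (b * q)),
    le_max_of_le_left (le_max_of_le_left (by norm_num)), fun c r hr => ?_⟩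
  have hlow := le_luxPhiNorm_chi_ball n c hr
  have hup := luxPhiNorm_chi_ball_le hn c hr
  have hS := iSup_ball_log_le c hr
  have hLS := log_le_two_mul_iSup_ball c hr
  have hp := log_add_log_le_mul_abs_log_add hn hr hw (norm_nonneg c)
  have hq := abs_log_add_log_le_mul hn hr hw (norm_nonneg c)
  rw [← toReal_volume_ball hn c hr.le] at hp hq
  have hE := one_le_log_exp_one_add (by positivity : 0 ≤ 1 / (volume (ball c r)).toReal)
  have hL := one_le_log_exp_one_add (by positivity : 0 ≤ ‖c‖ + r)
  have hM := one_le_log_exp_one_add (norm_nonneg c)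
  exact ⟨ofReal_le_and_le_ofReal_of_comparable ENNReal.toReal_nonneg (by linarith)
      (by linarith) (by norm_num) (by positivity) hlow hup (by linarith) (by linarith)
      (le_max_of_le_left (le_max_left _ _)) (le_max_of_le_left (le_max_right _ _)),
    ofReal_le_and_le_ofReal_of_comparable ENNReal.toReal_nonneg (by linarith)
      (by positivity) (by norm_num) (by positivity) hlow hup hp hq
      (le_max_of_le_right (le_max_left _ _)) (le_max_of_le_right (le_max_right _ _))⟩
end
end

section
/- Let n ≥ 1. There exists a constant C ≥ 1 such that for every ball B ⊂ ℝ^n, C^{-1} · |B|/(sup_{x ∈ B} log(e+|x|)) ≤ ∫_B 1/log(e+|x|) dx ≤ C · |B|/(sup_{x ∈ B} log(e+|x|)), i.e., the weighted norm ‖χ_B‖_{L^1_{W_1}} = ∫_B W_1(x) dx is comparable to |B|/sup_{x ∈ B} log(e+|x|) with constants independent of B. -/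
open MeasureTheory Real
open scoped ENNReal Classical

noncomputable section

lemma aux_one_le_log {s : ℝ} (hs : 0 ≤ s) : 1 ≤ Real.log (Real.exp 1 + s) := by
  calc (1:ℝ) = Real.log (Real.exp 1) := (Real.log_exp 1).symm
  _ ≤ _ := Real.log_le_log (Real.exp_pos 1) (by linarith)

lemma aux_log_pos (x : ℝ) (hx : 0 ≤ x) : 0 < Real.log (Real.exp 1 + x) :=
  lt_of_lt_of_le one_pos (aux_one_le_log hx)

lemma aux_log3 {R : ℝ} (hR : 0 ≤ R) :
    Real.log (Real.exp 1 + R) ≤ 3 * Real.log (Real.exp 1 + R / 3) := by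
  have he : (2:ℝ) ≤ Real.exp 1 := by
    have := Real.add_one_le_exp 1; linarith
  have hkey : Real.exp 1 + R ≤ (Real.exp 1 + R / 3) ^ 3 := by
    have hx : (0:ℝ) ≤ R / 3 := by linarith
    have he0 : (0:ℝ) ≤ Real.exp 1 := (Real.exp_pos 1).le
    have h1 : Real.exp 1 ≤ (Real.exp 1)^3 := by
      have h := mul_nonneg he0 (mul_nonneg (by linarith : (0:ℝ) ≤ Real.exp 1 - 1)
        (by linarith : (0:ℝ) ≤ Real.exp 1 + 1))
      nlinarith [h]
    have h2 : 3*(R/3) ≤ 3*(Real.exp 1)^2*(R/3) := by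
      have h := mul_nonneg (mul_nonneg (by linarith : (0:ℝ) ≤ Real.exp 1 - 1)
        (by linarith : (0:ℝ) ≤ Real.exp 1 + 1)) hx
      nlinarith [h]
    nlinarith [h1, h2, mul_nonneg (mul_nonneg hx hx) hx, mul_nonneg hx hx,
      (Real.exp_pos 1).le, mul_nonneg (mul_nonneg hx hx) (Real.exp_pos 1).le]
  calc Real.log (Real.exp 1 + R) ≤ Real.log ((Real.exp 1 + R / 3) ^ 3) :=
        Real.log_le_log (by positivity) hkey
  _ = 3 * Real.log (Real.exp 1 + R / 3) := by
        rw [Real.log_pow]; norm_num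

lemma aux_logk {R : ℝ} (hR : 0 ≤ R) (k : ℕ) :
    Real.log (Real.exp 1 + R) ≤ ((k:ℝ) + 2) * Real.log (Real.exp 1 + (1/2)^(k+1) * R) := by
  set s : ℝ := (1/2)^(k+1) * R with hs_def
  have hs : 0 ≤ s := by positivity
  have h1 : 1 ≤ Real.log (Real.exp 1 + s) := aux_one_le_log hs
  have hR2 : R = 2^(k+1) * s := by
    have h : (2:ℝ)^(k+1) * (1/2:ℝ)^(k+1) = 1 := by
      rw [← mul_pow]; norm_num
    rw [hs_def, ← mul_assoc, h, one_mul]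
  have hpow : (1:ℝ) ≤ 2^(k+1) := one_le_pow₀ (by norm_num)
  have hkey : Real.exp 1 + R ≤ 2^(k+1) * (Real.exp 1 + s) := by
    rw [hR2]; nlinarith [Real.exp_pos 1]
  have hlog2 : Real.log 2 ≤ 1 := by
    have := Real.log_two_lt_d9; linarith
  calc Real.log (Real.exp 1 + R) ≤ Real.log (2^(k+1) * (Real.exp 1 + s)) :=
        Real.log_le_log (by positivity) hkey
  _ = ((k:ℝ)+1) * Real.log 2 + Real.log (Real.exp 1 + s) := by
        rw [Real.log_mul (by positivity) (by positivity), Real.log_pow]; push_cast; ring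
  _ ≤ ((k:ℝ)+2) * Real.log (Real.exp 1 + s) := by
        have hk : (0:ℝ) ≤ (k:ℝ) + 1 := by positivity
        have hl2 : 0 ≤ Real.log 2 := Real.log_nonneg (by norm_num)
        nlinarith [hk, hlog2, h1]

lemma aux_geom (k : ℕ) : ((k:ℝ) + 2) * (1/2)^k ≤ 2 * (3/4)^k := by
  induction k with
  | zero => norm_num
  | succ k ih =>
    have h2 : (0:ℝ) ≤ (1/2)^k := by positivity
    rw [pow_succ, pow_succ]
    push_cast
    push_cast at ih
    nlinarith [ih, h2]

lemma aux_sum : ∑' k : ℕ, 2 * (3/4:ℝ)^k = 8 := by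
  rw [tsum_mul_left, tsum_geometric_of_lt_one (by norm_num) (by norm_num)]
  norm_num

lemma aux_summable : Summable (fun k : ℕ => 2 * (3/4:ℝ)^k) :=
  (summable_geometric_of_lt_one (by norm_num) (by norm_num)).mul_left 2

/-- `‖χ_B‖_{L^1_{W_1}} = ∫_B 1/log(e+|x|) dx ∼ |B| / sup_{x ∈ B} log(e+|x|)`. -/
theorem statement7 (n : ℕ) (hn : 1 ≤ n) :
    ∃ C : ℝ, 1 ≤ C ∧ ∀ (c : Rn n) (r : ℝ), 0 < r →
      ENNReal.ofReal (C⁻¹ * ((volume (Metric.ball c r)).toReal /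
          ⨆ x : Metric.ball c r, Real.log (Real.exp 1 + ‖(x : Rn n)‖))) ≤
        (∫⁻ x in Metric.ball c r, ENNReal.ofReal (1 / Real.log (Real.exp 1 + ‖x‖))) ∧
      (∫⁻ x in Metric.ball c r, ENNReal.ofReal (1 / Real.log (Real.exp 1 + ‖x‖))) ≤
        ENNReal.ofReal (C * ((volume (Metric.ball c r)).toReal /
          ⨆ x : Metric.ball c r, Real.log (Real.exp 1 + ‖(x : Rn n)‖))) := by
  haveI : Nontrivial (Rn n) := by
    refine ⟨0, EuclideanSpace.single ⟨0, hn⟩ 1, ?_⟩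
    apply ne_of_apply_ne (fun v => v ⟨0, hn⟩)
    simp [EuclideanSpace.single_apply]
  have h3n : (1:ℝ) ≤ 3 ^ n := one_le_pow₀ (by norm_num)
  refine ⟨8 * 3 ^ n, by nlinarith, ?_⟩
  intro c r hr
  have hne : (Metric.ball c r).Nonempty := Metric.nonempty_ball.mpr hr
  haveI := hne.to_subtype
  set M := ⨆ x : Metric.ball c r, Real.log (Real.exp 1 + ‖(x : Rn n)‖) with hM_def
  have hxnorm : ∀ x ∈ Metric.ball c r, ‖x‖ < ‖c‖ + r := by
    intro x hx
    have h1 : ‖x‖ - ‖c‖ ≤ dist x c := by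
      rw [dist_eq_norm]; exact norm_sub_norm_le x c
    have h2 := Metric.mem_ball.mp hx
    linarith
  have hub : ∀ x ∈ Metric.ball c r,
      Real.log (Real.exp 1 + ‖x‖) ≤ Real.log (Real.exp 1 + (‖c‖ + r)) := by
    intro x hx
    exact Real.log_le_log (by positivity) (by linarith [hxnorm x hx])
  have hbdd : BddAbove (Set.range fun x : Metric.ball c r =>
      Real.log (Real.exp 1 + ‖(x : Rn n)‖)) := by
    refine ⟨Real.log (Real.exp 1 + (‖c‖ + r)), ?_⟩
    rintro y ⟨x, rfl⟩
    exact hub x x.2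
  have hMle : ∀ x ∈ Metric.ball c r, Real.log (Real.exp 1 + ‖x‖) ≤ M := by
    intro x hx
    exact le_ciSup hbdd ⟨x, hx⟩
  have hM1 : 1 ≤ M :=
    le_trans (aux_one_le_log (norm_nonneg c)) (hMle c (Metric.mem_ball_self hr))
  have hM0 : 0 < M := lt_of_lt_of_le one_pos hM1
  have hMub : M ≤ Real.log (Real.exp 1 + (‖c‖ + r)) := ciSup_le fun x => hub x x.2
  have hL0 : ∀ x : Rn n, 0 < Real.log (Real.exp 1 + ‖x‖) :=
    fun x => aux_log_pos _ (norm_nonneg x)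
  -- volume facts
  have hvoltop : volume (Metric.ball c r) ≠ ⊤ := measure_ball_lt_top.ne
  set ι := volume (Metric.ball (0 : Rn n) 1) with hι_def
  have hιtop : ι ≠ ⊤ := measure_ball_lt_top.ne
  set ν := ι.toReal with hν_def
  have hν0 : 0 ≤ ν := ENNReal.toReal_nonneg
  have hι : ι = ENNReal.ofReal ν := (ENNReal.ofReal_toReal hιtop).symm
  have hvol : volume (Metric.ball c r) = ENNReal.ofReal (r ^ n) * ι := by
    simpa [finrank_euclideanSpace_fin] using Measure.addHaar_ball volume c hr.le
  have hV : (volume (Metric.ball c r)).toReal = r ^ n * ν := by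
    rw [hvol, ENNReal.toReal_mul, ENNReal.toReal_ofReal (by positivity)]
  constructor
  · -- lower bound
    calc ENNReal.ofReal ((8 * 3 ^ n : ℝ)⁻¹ * ((volume (Metric.ball c r)).toReal / M))
        ≤ ENNReal.ofReal (1 / M * (volume (Metric.ball c r)).toReal) := by
          apply ENNReal.ofReal_le_ofReal
          have hinv : (8 * 3 ^ n : ℝ)⁻¹ ≤ 1 := by
            rw [inv_le_one_iff₀]; right; nlinarith
          have hVn : 0 ≤ (volume (Metric.ball c r)).toReal := ENNReal.toReal_nonneg
          rw [one_div, div_eq_mul_inv]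
          calc (8 * 3 ^ n : ℝ)⁻¹ * ((volume (Metric.ball c r)).toReal * M⁻¹)
              ≤ 1 * ((volume (Metric.ball c r)).toReal * M⁻¹) := by
                apply mul_le_mul_of_nonneg_right hinv
                positivity
          _ = M⁻¹ * (volume (Metric.ball c r)).toReal := by ring
    _ = ENNReal.ofReal (1 / M) * volume (Metric.ball c r) := by
          rw [ENNReal.ofReal_mul (by positivity), ENNReal.ofReal_toReal hvoltop]
    _ = ∫⁻ _x in Metric.ball c r, ENNReal.ofReal (1 / M) := by
          rw [setLIntegral_const]
    _ ≤ ∫⁻ x in Metric.ball c r, ENNReal.ofReal (1 / Real.log (Real.exp 1 + ‖x‖)) := by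
          apply setLIntegral_mono' measurableSet_ball
          intro x hx
          apply ENNReal.ofReal_le_ofReal
          exact one_div_le_one_div_of_le (hL0 x) (hMle x hx)
  · -- upper bound
    by_cases hc : ‖c‖ ≤ 2 * r
    · -- ball near origin: dyadic decomposition
      set R := 3 * r with hR_def
      have hRpos : 0 < R := by positivity
      have hsub : Metric.ball c r ⊆ Metric.ball (0 : Rn n) R := by
        intro x hx
        rw [mem_ball_zero_iff]
        have := hxnorm x hx
        simp only [hR_def]
        linarith
      set LR := Real.log (Real.exp 1 + R) with hLR_def
      have hLR1 : 1 ≤ LR := aux_one_le_log hRpos.le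
      have hLR0 : 0 < LR := lt_of_lt_of_le one_pos hLR1
      have hMR : M ≤ LR := by
        refine hMub.trans (Real.log_le_log (by positivity) ?_)
        simp only [hR_def]; linarith
      set A : ℕ → Set (Rn n) := fun k =>
        Metric.ball 0 ((1/2)^k * R) \ Metric.ball 0 ((1/2)^(k+1) * R) with hA_def
      have hcover : Metric.ball (0 : Rn n) R \ {0} ⊆ ⋃ k, A k := by
        intro x hx
        obtain ⟨hxR, hx0⟩ := hx
        rw [mem_ball_zero_iff] at hxR
        have hx0' : 0 < ‖x‖ := norm_pos_iff.mpr hx0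
        have hex : ∃ k : ℕ, (1/2:ℝ)^(k+1) * R ≤ ‖x‖ := by
          obtain ⟨m, hm⟩ := exists_pow_lt_of_lt_one (x := ‖x‖ / R)
            (by positivity) (by norm_num : (1/2:ℝ) < 1)
          refine ⟨m, ?_⟩
          have h1 : ((1/2:ℝ))^(m+1) ≤ (1/2)^m := by
            apply pow_le_pow_of_le_one (by norm_num) (by norm_num); omega
          have h2 : ((1/2:ℝ))^m * R < ‖x‖ := by
            rw [← lt_div_iff₀ hRpos] at *; linarith
          nlinarith [h1, hRpos]
        set k := Nat.find hex with hk_def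
        have hk := Nat.find_spec hex
        refine Set.mem_iUnion.mpr ⟨k, ?_, ?_⟩
        · rw [mem_ball_zero_iff]
          match hkk : k with
          | 0 => simpa using hxR
          | j+1 =>
            have hmin := Nat.find_min hex (m := j) (by omega)
            push_neg at hmin
            exact hmin
        · rw [Metric.mem_ball, not_lt, dist_zero_right]
          exact hk
      have hzero : (volume : Measure (Rn n)) {0} = 0 := measure_singleton 0
      have haeq : (Metric.ball (0 : Rn n) R \ {0} : Set (Rn n)) =ᵐ[volume]
          Metric.ball (0 : Rn n) R :=
        diff_ae_eq_self.mpr (measure_mono_null Set.inter_subset_right hzero)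
      have hAk : ∀ k : ℕ, (∫⁻ x in A k, ENNReal.ofReal (1 / Real.log (Real.exp 1 + ‖x‖)))
          ≤ ENNReal.ofReal (2 * (3/4)^k * (R^n / LR)) * ι := by
        intro k
        have hmeas : MeasurableSet (A k) := measurableSet_ball.diff measurableSet_ball
        calc (∫⁻ x in A k, ENNReal.ofReal (1 / Real.log (Real.exp 1 + ‖x‖)))
            ≤ ∫⁻ _x in A k, ENNReal.ofReal (((k:ℝ)+2)/LR) := by
              apply setLIntegral_mono' hmeas
              intro x hx
              apply ENNReal.ofReal_le_ofReal
              have hxlow : (1/2:ℝ)^(k+1) * R ≤ ‖x‖ := by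
                have h := hx.2
                rw [Metric.mem_ball, dist_zero_right, not_lt] at h
                exact h
              have hlog : LR ≤ ((k:ℝ)+2) * Real.log (Real.exp 1 + ‖x‖) := by
                calc LR ≤ ((k:ℝ)+2) * Real.log (Real.exp 1 + (1/2)^(k+1)*R) :=
                      aux_logk hRpos.le k
                _ ≤ _ := by
                    apply mul_le_mul_of_nonneg_left
                      (Real.log_le_log (by positivity) (by linarith)) (by positivity)
              rw [div_le_div_iff₀ (hL0 x) hLR0, one_mul]
              exact hlog
        _ = ENNReal.ofReal (((k:ℝ)+2)/LR) * volume (A k) := setLIntegral_const _ _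
        _ ≤ ENNReal.ofReal (((k:ℝ)+2)/LR) * volume (Metric.ball (0:Rn n) ((1/2)^k * R)) :=
              mul_le_mul_right (measure_mono Set.diff_subset) _
        _ = ENNReal.ofReal (((k:ℝ)+2)/LR) * (ENNReal.ofReal (((1/2:ℝ)^k*R)^n) * ι) := by
              rw [show volume (Metric.ball (0:Rn n) ((1/2)^k * R))
                  = ENNReal.ofReal (((1/2:ℝ)^k*R)^n) * ι from by
                simpa [finrank_euclideanSpace_fin] using
                  Measure.addHaar_ball volume (0:Rn n)
                    (by positivity : (0:ℝ) ≤ (1/2)^k*R)]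
        _ = ENNReal.ofReal (((k:ℝ)+2)/LR * ((1/2:ℝ)^k*R)^n) * ι := by
              rw [← mul_assoc, ← ENNReal.ofReal_mul (by positivity)]
        _ ≤ ENNReal.ofReal (2 * (3/4)^k * (R^n / LR)) * ι := by
              apply mul_le_mul_left
              apply ENNReal.ofReal_le_ofReal
              have h1 : ((1/2:ℝ)^k*R)^n ≤ (1/2)^k * R^n := by
                rw [mul_pow]
                apply mul_le_mul_of_nonneg_right _ (by positivity)
                rw [← pow_mul]
                exact pow_le_pow_of_le_one (by norm_num) (by norm_num)
                  (Nat.le_mul_of_pos_right k (by omega))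
              have h2 := aux_geom k
              calc ((k:ℝ)+2)/LR * ((1/2:ℝ)^k*R)^n
                  ≤ ((k:ℝ)+2)/LR * ((1/2:ℝ)^k * R^n) := by
                    apply mul_le_mul_of_nonneg_left h1 (by positivity)
              _ = ((k:ℝ)+2)*(1/2)^k * (R^n/LR) := by ring
              _ ≤ 2*(3/4)^k * (R^n/LR) :=
                    mul_le_mul_of_nonneg_right h2 (by positivity)
      calc (∫⁻ x in Metric.ball c r, ENNReal.ofReal (1 / Real.log (Real.exp 1 + ‖x‖)))
          ≤ ∫⁻ x in Metric.ball (0:Rn n) R, ENNReal.ofReal (1 / Real.log (Real.exp 1 + ‖x‖)) :=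
            lintegral_mono_set hsub
      _ = ∫⁻ x in Metric.ball (0:Rn n) R \ {0}, ENNReal.ofReal (1 / Real.log (Real.exp 1 + ‖x‖)) :=
            (setLIntegral_congr haeq).symm
      _ ≤ ∫⁻ x in ⋃ k, A k, ENNReal.ofReal (1 / Real.log (Real.exp 1 + ‖x‖)) :=
            lintegral_mono_set hcover
      _ ≤ ∑' k, ∫⁻ x in A k, ENNReal.ofReal (1 / Real.log (Real.exp 1 + ‖x‖)) :=
            lintegral_iUnion_le _ _
      _ ≤ ∑' k, ENNReal.ofReal (2 * (3/4)^k * (R^n / LR)) * ι :=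
            ENNReal.tsum_le_tsum hAk
      _ = (∑' k, ENNReal.ofReal (2 * (3/4)^k * (R^n / LR))) * ι := ENNReal.tsum_mul_right
      _ = ENNReal.ofReal (∑' k : ℕ, 2 * (3/4:ℝ)^k * (R^n / LR)) * ι := by
            rw [ENNReal.ofReal_tsum_of_nonneg (fun k => by positivity)
              (aux_summable.mul_right _)]
      _ = ENNReal.ofReal (8 * (R^n / LR)) * ι := by
            rw [tsum_mul_right, aux_sum]
      _ = ENNReal.ofReal (8 * (R^n / LR) * ν) := by
            rw [hι, ← ENNReal.ofReal_mul (by positivity)]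
      _ ≤ ENNReal.ofReal (8 * 3 ^ n *
            ((volume (Metric.ball c r)).toReal /
              ⨆ x : Metric.ball c r, Real.log (Real.exp 1 + ‖(x : Rn n)‖))) := by
            apply ENNReal.ofReal_le_ofReal
            rw [← hM_def, hV]
            have hRn : R^n = 3^n * r^n := by rw [hR_def, mul_pow]
            rw [hRn]
            calc 8*((3^n*r^n)/LR)*ν = (8*3^n*(r^n*ν))/LR := by ring
            _ ≤ (8*3^n*(r^n*ν))/M :=
                  div_le_div_of_nonneg_left (by positivity) hM0 hMR
            _ = 8*3^n*(r^n*ν/M) := by ring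
    · push_neg at hc
      have hVn : 0 ≤ (volume (Metric.ball c r)).toReal := ENNReal.toReal_nonneg
      calc (∫⁻ x in Metric.ball c r, ENNReal.ofReal (1 / Real.log (Real.exp 1 + ‖x‖)))
          ≤ ∫⁻ _x in Metric.ball c r, ENNReal.ofReal (3/M) := by
            apply setLIntegral_mono' measurableSet_ball
            intro x hx
            apply ENNReal.ofReal_le_ofReal
            have h1 : ‖c‖ - r ≤ ‖x‖ := by
              have ha : ‖c‖ - ‖x‖ ≤ ‖c - x‖ := norm_sub_norm_le c x
              have hb : ‖c - x‖ = dist x c := by rw [dist_eq_norm, norm_sub_rev]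
              have hd := Metric.mem_ball.mp hx
              linarith [ha, hb ▸ ha]
            have h2 : (‖c‖+r)/3 ≤ ‖x‖ := by linarith
            have h3 : M ≤ 3 * Real.log (Real.exp 1 + ‖x‖) := by
              calc M ≤ Real.log (Real.exp 1 + (‖c‖+r)) := hMub
              _ ≤ 3 * Real.log (Real.exp 1 + (‖c‖+r)/3) := aux_log3 (by positivity)
              _ ≤ 3 * Real.log (Real.exp 1 + ‖x‖) := by
                  have := Real.log_le_log (by positivity)
                    (by linarith : Real.exp 1 + (‖c‖+r)/3 ≤ Real.exp 1 + ‖x‖)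
                  linarith
            rw [div_le_div_iff₀ (hL0 x) hM0, one_mul]
            linarith
      _ = ENNReal.ofReal (3/M) * volume (Metric.ball c r) := setLIntegral_const _ _
      _ = ENNReal.ofReal (3/M * (volume (Metric.ball c r)).toReal) := by
            rw [ENNReal.ofReal_mul (by positivity), ENNReal.ofReal_toReal hvoltop]
      _ ≤ ENNReal.ofReal (8 * 3 ^ n *
            ((volume (Metric.ball c r)).toReal /
              ⨆ x : Metric.ball c r, Real.log (Real.exp 1 + ‖(x : Rn n)‖))) := by
            apply ENNReal.ofReal_le_ofReal
            rw [← hM_def]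
            calc 3/M * (volume (Metric.ball c r)).toReal
                = 3 * ((volume (Metric.ball c r)).toReal / M) := by ring
            _ ≤ 8 * 3 ^ n * ((volume (Metric.ball c r)).toReal / M) :=
                  mul_le_mul_of_nonneg_right (by nlinarith) (by positivity)
end
end

section
/- Let n ≥ 1 and p ∈ (0,1]. The weight W_p belongs to the Muckenhoupt class A_1(ℝ^n): there exists a constant C > 0 such that for every ball B ⊂ ℝ^n, (1/|B|) ∫_B W_p(x) dx ≤ C · inf_{y ∈ B} W_p(y), where |B| denotes the Lebesgue measure of B. -/
open MeasureTheory Real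
open scoped ENNReal Classical

noncomputable section

/-!
`W_p(x)` is a radial weight `w(x) = (1 + |x|) ^ (-a) * log (e + |x|) ^ (-q)` with `0 ≤ a < n` and
`0 ≤ q ≤ 1`. It decreases in `|x|`, so its infimum over `B(c, r)` is at least `w` at radius
`|c| + r`; and for `s ≤ t`, `w(s) ≤ C_ε ((1 + t) / (1 + s)) ^ (a + ε) w(t)` for every `ε > 0`.
If `r ≤ (1 + |c|) / 2`, all radii met by the ball are comparable, so `w` is essentially constant
on it. Otherwise `B(c, r) ⊆ B(0, 3r)` has comparable volume, and choosing `a + ε < n` and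
integrating `|x| ^ (-(a + ε))` in polar coordinates gives `∫_{B(0, R)} w ≤ C R ^ n w(R)`.
-/

open Metric Set Module

/-- For continuous `w` the infimum over a ball is its essential infimum there, so this is the
usual Muckenhoupt `A₁` condition. -/
def IsA1Weight {E : Type*} [PseudoMetricSpace E] [MeasurableSpace E] (μ : Measure E)
    (w : E → ℝ) : Prop :=
  ∃ C : ℝ, 0 < C ∧ ∀ (c : E) (r : ℝ), 0 < r →
    (μ (ball c r)).toReal⁻¹ * (∫ x in ball c r, w x ∂μ) ≤ C * ⨅ y : ball c r, w y

def radialWeight (a q s : ℝ) : ℝ := (1 + s) ^ (-a) * log (exp 1 + s) ^ (-q)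

section RadialWeight

variable {a q s t : ℝ}

lemma one_le_log_exp_one_add_s10 (hs : 0 ≤ s) : 1 ≤ log (exp 1 + s) :=
  calc (1 : ℝ) = log (exp 1) := (log_exp 1).symm
    _ ≤ log (exp 1 + s) := log_le_log (exp_pos 1) (by linarith)

lemma log_exp_one_add_pos (hs : 0 ≤ s) : 0 < log (exp 1 + s) :=
  one_pos.trans_le (one_le_log_exp_one_add_s10 hs)

lemma radialWeight_pos (hs : 0 ≤ s) : 0 < radialWeight a q s :=
  mul_pos (rpow_pos_of_pos (by linarith) _) (rpow_pos_of_pos (log_exp_one_add_pos hs) _)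

lemma radialWeight_le_one (ha : 0 ≤ a) (hq : 0 ≤ q) (hs : 0 ≤ s) : radialWeight a q s ≤ 1 :=
  mul_le_one₀ (rpow_le_one_of_one_le_of_nonpos (by linarith) (neg_nonpos.2 ha))
    (rpow_nonneg (log_exp_one_add_pos hs).le _)
    (rpow_le_one_of_one_le_of_nonpos (one_le_log_exp_one_add_s10 hs) (neg_nonpos.2 hq))

lemma radialWeight_antitoneOn (ha : 0 ≤ a) (hq : 0 ≤ q) :
    AntitoneOn (radialWeight a q) (Ici 0) := by
  intro s (hs : 0 ≤ s) t (ht : 0 ≤ t) hst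
  exact mul_le_mul (rpow_le_rpow_of_nonpos (by linarith) (by linarith) (neg_nonpos.2 ha))
    (rpow_le_rpow_of_nonpos (log_exp_one_add_pos hs) (log_le_log (by positivity) (by linarith))
      (neg_nonpos.2 hq))
    (rpow_nonneg (log_exp_one_add_pos ht).le _) (rpow_nonneg (by linarith) _)

lemma measurable_radialWeight : Measurable (radialWeight a q) := by
  unfold radialWeight
  fun_prop

lemma radialWeight_eq_mul (hs : 0 ≤ s) (ht : 0 ≤ t) :
    radialWeight a q s = ((1 + t) / (1 + s)) ^ a *
      (log (exp 1 + t) / log (exp 1 + s)) ^ q * radialWeight a q t := by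
  have hLs := log_exp_one_add_pos hs
  have hLt := log_exp_one_add_pos ht
  unfold radialWeight
  rw [div_rpow (by linarith) (by linarith), div_rpow hLt.le hLs.le,
    rpow_neg (by linarith : (0 : ℝ) ≤ 1 + s), rpow_neg (by linarith : (0 : ℝ) ≤ 1 + t),
    rpow_neg hLs.le, rpow_neg hLt.le]
  have : (0 : ℝ) < (1 + s) ^ a := rpow_pos_of_pos (by linarith) a
  have : (0 : ℝ) < (1 + t) ^ a := rpow_pos_of_pos (by linarith) a
  have : 0 < log (exp 1 + s) ^ q := rpow_pos_of_pos hLs q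
  have : 0 < log (exp 1 + t) ^ q := rpow_pos_of_pos hLt q
  field_simp

lemma log_div_log_le_one_add_log (hs : 0 ≤ s) (hst : s ≤ t) :
    log (exp 1 + t) / log (exp 1 + s) ≤ 1 + log ((1 + t) / (1 + s)) := by
  have hLs := one_le_log_exp_one_add_s10 hs
  have hlog_nonneg : 0 ≤ log ((1 + t) / (1 + s)) :=
    log_nonneg ((one_le_div (by linarith)).2 (by linarith))
  have hes : 0 < exp 1 + s := by linarith [exp_pos 1]
  have het : 0 < exp 1 + t := by linarith [exp_pos 1]
  have hratio : (exp 1 + t) / (exp 1 + s) ≤ (1 + t) / (1 + s) := by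
    rw [div_le_div_iff₀ hes (by linarith)]
    nlinarith [add_one_le_exp (1 : ℝ)]
  have hdiff : log (exp 1 + t) - log (exp 1 + s) ≤ log ((1 + t) / (1 + s)) := by
    rw [← log_div het.ne' hes.ne']
    exact log_le_log (div_pos het hes) hratio
  rw [div_le_iff₀ (by linarith)]
  nlinarith

lemma one_add_log_le_mul_rpow {u ε : ℝ} (hu : 1 ≤ u) (hε : 0 < ε) :
    1 + log u ≤ (1 + ε⁻¹) * u ^ ε := by
  have h1 : 1 ≤ u ^ ε := one_le_rpow hu hε.le
  have h2 : log u ≤ u ^ ε / ε := log_le_rpow_div (by linarith) hε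
  calc 1 + log u ≤ u ^ ε + u ^ ε / ε := by linarith
    _ = (1 + ε⁻¹) * u ^ ε := by ring

/-- The logarithmic factor is absorbed into an extra power `ε` of the ratio of the radii, since
`log u ≤ u ^ ε / ε`. -/
lemma radialWeight_le_mul_rpow {ε : ℝ} (hq : q ≤ 1) (hε : 0 < ε) (hs : 0 ≤ s) (hst : s ≤ t) :
    radialWeight a q s ≤ (1 + ε⁻¹) * ((1 + t) / (1 + s)) ^ (a + ε) * radialWeight a q t := by
  set u := (1 + t) / (1 + s)
  set v := log (exp 1 + t) / log (exp 1 + s)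
  have hu : 1 ≤ u := (one_le_div (by linarith)).2 (by linarith)
  have hv : 1 ≤ v := (one_le_div (log_exp_one_add_pos hs)).2
    (log_le_log (by positivity) (by linarith))
  have hvq : v ^ q ≤ (1 + ε⁻¹) * u ^ ε :=
    calc v ^ q ≤ v := by simpa using rpow_le_rpow_of_exponent_le hv hq
      _ ≤ 1 + log u := log_div_log_le_one_add_log hs hst
      _ ≤ (1 + ε⁻¹) * u ^ ε := one_add_log_le_mul_rpow hu hε
  rw [radialWeight_eq_mul hs (hs.trans hst), rpow_add (by linarith)]
  calc u ^ a * v ^ q * radialWeight a q t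
      ≤ u ^ a * ((1 + ε⁻¹) * u ^ ε) * radialWeight a q t :=
        mul_le_mul_of_nonneg_right (mul_le_mul_of_nonneg_left hvq (rpow_nonneg (by linarith) _))
          (radialWeight_pos (hs.trans hst)).le
    _ = (1 + ε⁻¹) * (u ^ a * u ^ ε) * radialWeight a q t := by ring

lemma radialWeight_le_mul_rpow_neg {ε : ℝ} (ha : 0 ≤ a) (hq : q ≤ 1) (hε : 0 < ε)
    (hs : 0 < s) (hst : s ≤ t) :
    radialWeight a q s ≤
      (1 + ε⁻¹) * (2 * t) ^ (a + ε) * radialWeight a q t * s ^ (-(a + ε)) := by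
  have hratio : (1 + t) / (1 + s) ≤ 2 * t / s := by
    rw [div_le_div_iff₀ (by linarith) hs]
    nlinarith
  have hpow : ((1 + t) / (1 + s)) ^ (a + ε) ≤ (2 * t) ^ (a + ε) * s ^ (-(a + ε)) := by
    rw [rpow_neg hs.le, ← div_eq_mul_inv, ← div_rpow (by linarith) hs.le]
    exact rpow_le_rpow (div_nonneg (by linarith) (by linarith)) hratio (by linarith)
  calc radialWeight a q s
      ≤ (1 + ε⁻¹) * ((1 + t) / (1 + s)) ^ (a + ε) * radialWeight a q t :=
        radialWeight_le_mul_rpow hq hε hs.le hst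
    _ ≤ (1 + ε⁻¹) * ((2 * t) ^ (a + ε) * s ^ (-(a + ε))) * radialWeight a q t := by
        gcongr
        exact (radialWeight_pos (hs.le.trans hst)).le
    _ = (1 + ε⁻¹) * (2 * t) ^ (a + ε) * radialWeight a q t * s ^ (-(a + ε)) := by ring

end RadialWeight

lemma toReal_inv_mul_setIntegral_le {α : Type*} [MeasurableSpace α] {μ : Measure α}
    {s : Set α} {f : α → ℝ} {M : ℝ} (hs₀ : μ s ≠ 0) (hs : μ s < ∞)
    (hf : ∀ x ∈ s, ‖f x‖ ≤ M) :
    (μ s).toReal⁻¹ * ∫ x in s, f x ∂μ ≤ M := by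
  rw [inv_mul_le_iff₀ (ENNReal.toReal_pos hs₀ hs.ne), mul_comm]
  exact (le_abs_self _).trans (norm_setIntegral_le_of_norm_le_const hs hf)

lemma integrableOn_radialWeight_norm {E : Type*} [NormedAddCommGroup E] [MeasurableSpace E]
    [OpensMeasurableSpace E] {μ : Measure E} {a q : ℝ} (ha : 0 ≤ a) (hq : 0 ≤ q) {s : Set E}
    (hs : μ s ≠ ∞) : IntegrableOn (fun x => radialWeight a q ‖x‖) s μ :=
  Measure.integrableOn_of_bounded (M := 1) hs
    (measurable_radialWeight.comp measurable_norm).aestronglyMeasurable <|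
    ae_of_all _ fun x => by
      rw [norm_of_nonneg (radialWeight_pos (norm_nonneg x)).le]
      exact radialWeight_le_one ha hq (norm_nonneg x)

lemma radialWeight_le_iInf_ball {E : Type*} [SeminormedAddCommGroup E] {a q t r : ℝ}
    (ha : 0 ≤ a) (hq : 0 ≤ q) {c : E} (hr : 0 < r) (ht : ‖c‖ + r ≤ t) :
    radialWeight a q t ≤ ⨅ y : ball c r, radialWeight a q ‖(y : E)‖ := by
  have : Nonempty (ball c r) := (nonempty_ball.2 hr).to_subtype
  exact le_ciInf fun y => radialWeight_antitoneOn ha hq (norm_nonneg _)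
    ((norm_nonneg c).trans (by linarith)) ((norm_lt_of_mem_ball y.2).le.trans ht)

lemma toReal_inv_mul_setIntegral_radialWeight_le_of_le {E : Type*} [SeminormedAddCommGroup E]
    [ProperSpace E] [MeasurableSpace E] (μ : Measure E) [μ.IsOpenPosMeasure]
    [IsFiniteMeasureOnCompacts μ] {a q : ℝ} (ha : 0 ≤ a) (hq : q ≤ 1) {c : E} {r : ℝ}
    (hr : 0 < r) (hrc : r ≤ (1 + ‖c‖) / 2) :
    (μ (ball c r)).toReal⁻¹ * ∫ x in ball c r, radialWeight a q ‖x‖ ∂μ ≤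
      2 * 3 ^ (a + 1) * radialWeight a q (‖c‖ + r) := by
  refine toReal_inv_mul_setIntegral_le (measure_ball_pos μ c hr).ne' measure_ball_lt_top
    fun x hx => ?_
  have hxc : ‖x‖ < ‖c‖ + r := norm_lt_of_mem_ball hx
  have hcx : ‖c‖ < ‖x‖ + r := norm_lt_of_mem_ball (mem_ball_comm.1 hx)
  have hratio : (1 + (‖c‖ + r)) / (1 + ‖x‖) ≤ 3 := by
    rw [div_le_iff₀ (by positivity)]
    linarith
  rw [norm_of_nonneg (radialWeight_pos (norm_nonneg x)).le]
  calc radialWeight a q ‖x‖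
      ≤ (1 + 1⁻¹) * ((1 + (‖c‖ + r)) / (1 + ‖x‖)) ^ (a + 1) * radialWeight a q (‖c‖ + r) :=
        radialWeight_le_mul_rpow hq one_pos (norm_nonneg x) hxc.le
    _ ≤ (1 + 1⁻¹) * 3 ^ (a + 1) * radialWeight a q (‖c‖ + r) := by
        gcongr
        exact (radialWeight_pos (by positivity)).le
    _ = 2 * 3 ^ (a + 1) * radialWeight a q (‖c‖ + r) := by norm_num

section AddHaar

variable {E : Type*} [NormedAddCommGroup E] [NormedSpace ℝ E] [FiniteDimensional ℝ E]
  [MeasurableSpace E] [BorelSpace E] (μ : Measure E) [μ.IsAddHaarMeasure] {a q : ℝ}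

lemma setIntegral_ball_zero_norm_rpow_neg [Nontrivial E] {β R : ℝ} (hβ : β < finrank ℝ E)
    (hR : 0 ≤ R) :
    ∫ x in ball (0 : E) R, ‖x‖ ^ (-β) ∂μ =
      finrank ℝ E * μ.real (ball 0 1) * (R ^ (finrank ℝ E - β) / (finrank ℝ E - β)) := by
  have hd : 1 ≤ finrank ℝ E := finrank_pos
  have hindicator : (ball (0 : E) R).indicator (fun x => ‖x‖ ^ (-β)) =
      fun x => (Iio R).indicator (fun y => y ^ (-β)) ‖x‖ := by
    ext x
    simp [indicator]
  have hradial : ∫ y in Ioi (0 : ℝ), y ^ (finrank ℝ E - 1) • (Iio R).indicator (· ^ (-β)) y =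
      ∫ y in (0 : ℝ)..R, y ^ ((finrank ℝ E : ℝ) - β - 1) := by
    rw [intervalIntegral.integral_of_le hR, integral_Ioc_eq_integral_Ioo, ← Ioi_inter_Iio,
      ← setIntegral_indicator measurableSet_Iio]
    refine setIntegral_congr_fun measurableSet_Ioi fun y (hy : 0 < y) => ?_
    by_cases hyR : y < R
    · simp only [indicator_of_mem (show y ∈ Iio R from hyR), smul_eq_mul]
      rw [← rpow_natCast, ← rpow_add hy, Nat.cast_sub hd, Nat.cast_one]
      ring_nf
    · simp [hyR]
  rw [← integral_indicator measurableSet_ball, hindicator, integral_fun_norm_addHaar, hradial,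
    integral_rpow (Or.inl (by linarith)), zero_rpow (by linarith)]
  simp only [sub_add_cancel, sub_zero, nsmul_eq_mul, smul_eq_mul]
  ring

lemma setIntegral_ball_zero_radialWeight_le [Nontrivial E] {ε R : ℝ} (ha : 0 ≤ a) (hq₀ : 0 ≤ q)
    (hq₁ : q ≤ 1) (hε : 0 < ε) (haε : a + ε < finrank ℝ E) (hR : 0 < R) :
    ∫ x in ball (0 : E) R, radialWeight a q ‖x‖ ∂μ ≤
      (1 + ε⁻¹) * 2 ^ (a + ε) * finrank ℝ E * μ.real (ball 0 1) / (finrank ℝ E - (a + ε)) *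
        R ^ finrank ℝ E * radialWeight a q R := by
  set K := (1 + ε⁻¹) * (2 * R) ^ (a + ε) * radialWeight a q R
  have hbound : ∀ᵐ x ∂μ.restrict (ball 0 R),
      radialWeight a q ‖x‖ ≤ K * ‖x‖ ^ (-(a + ε)) := by
    filter_upwards [ae_restrict_mem measurableSet_ball,
      ae_restrict_of_ae (compl_mem_ae_iff.2 (measure_singleton (μ := μ) 0))] with x hxR hx0
    exact radialWeight_le_mul_rpow_neg ha hq₁ hε (norm_pos_iff.2 hx0)
      (mem_ball_zero_iff.1 hxR).le
  have hint : IntegrableOn (fun x : E => ‖x‖ ^ (-(a + ε))) (ball 0 R) μ :=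
    integrableOn_ball_of_norm_le_rpow (C := 1) (α := a + ε) finrank_pos haε
      (ae_of_all _ fun x => by simp [norm_of_nonneg (rpow_nonneg (norm_nonneg x) _)])
      (measurable_norm.pow_const _).aestronglyMeasurable
  calc ∫ x in ball (0 : E) R, radialWeight a q ‖x‖ ∂μ
      ≤ ∫ x in ball (0 : E) R, K * ‖x‖ ^ (-(a + ε)) ∂μ :=
        integral_mono_ae (integrableOn_radialWeight_norm ha hq₀ measure_ball_lt_top.ne)
          (hint.const_mul K) hbound
    _ = _ := by
        rw [integral_const_mul, setIntegral_ball_zero_norm_rpow_neg μ (by linarith) hR.le]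
        have hRpow : (2 * R) ^ (a + ε) * R ^ ((finrank ℝ E : ℝ) - (a + ε)) =
            2 ^ (a + ε) * R ^ finrank ℝ E := by
          rw [mul_rpow zero_le_two hR.le, mul_assoc, ← rpow_add hR, add_sub_cancel, rpow_natCast]
        linear_combination (1 + ε⁻¹) * radialWeight a q R * finrank ℝ E * μ.real (ball 0 1) /
          (finrank ℝ E - (a + ε)) * hRpow

lemma toReal_inv_mul_setIntegral_radialWeight_le_of_lt [Nontrivial E] {ε : ℝ} (ha : 0 ≤ a)
    (hq₀ : 0 ≤ q) (hq₁ : q ≤ 1) (hε : 0 < ε) (haε : a + ε < finrank ℝ E) {c : E} {r : ℝ}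
    (hrc : (1 + ‖c‖) / 2 < r) :
    (μ (ball c r)).toReal⁻¹ * ∫ x in ball c r, radialWeight a q ‖x‖ ∂μ ≤
      (1 + ε⁻¹) * 2 ^ (a + ε) * finrank ℝ E * 3 ^ finrank ℝ E / (finrank ℝ E - (a + ε)) *
        radialWeight a q (3 * r) := by
  have hr : 0 < r := by linarith [norm_nonneg c]
  have hsub : ball c r ⊆ ball 0 (3 * r) := fun x hx =>
    mem_ball_zero_iff.2 (by linarith [norm_lt_of_mem_ball hx])
  have hB₁ : 0 < μ.real (ball 0 1) :=
    ENNReal.toReal_pos (measure_ball_pos μ 0 one_pos).ne' measure_ball_lt_top.ne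
  have hvol : (μ (ball c r)).toReal = r ^ finrank ℝ E * μ.real (ball 0 1) := by
    rw [Measure.addHaar_ball μ c hr.le, ENNReal.toReal_mul, ENNReal.toReal_ofReal (by positivity),
      measureReal_def]
  rw [hvol, inv_mul_le_iff₀ (by positivity)]
  calc ∫ x in ball c r, radialWeight a q ‖x‖ ∂μ
      ≤ ∫ x in ball 0 (3 * r), radialWeight a q ‖x‖ ∂μ :=
        setIntegral_mono_set (integrableOn_radialWeight_norm ha hq₀ measure_ball_lt_top.ne)
          (ae_of_all _ fun x => (radialWeight_pos (norm_nonneg x)).le)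
          (Filter.Eventually.of_forall fun x hx => hsub hx)
    _ ≤ _ := setIntegral_ball_zero_radialWeight_le μ ha hq₀ hq₁ hε haε (by positivity)
    _ = _ := by
        rw [mul_pow]
        have : 0 < (finrank ℝ E : ℝ) - (a + ε) := by linarith
        field_simp

theorem isA1Weight_radialWeight (ha : 0 ≤ a) (had : a < finrank ℝ E) (hq₀ : 0 ≤ q)
    (hq₁ : q ≤ 1) : IsA1Weight μ fun x => radialWeight a q ‖x‖ := by
  have : Nontrivial E :=
    Module.nontrivial_of_finrank_pos (R := ℝ) (by exact_mod_cast ha.trans_lt had)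
  obtain ⟨ε, hε, haε⟩ : ∃ ε : ℝ, 0 < ε ∧ a + ε < finrank ℝ E :=
    ⟨(finrank ℝ E - a) / 2, by linarith, by linarith⟩
  set K₁ : ℝ := 2 * 3 ^ (a + 1)
  set K₂ : ℝ :=
    (1 + ε⁻¹) * 2 ^ (a + ε) * finrank ℝ E * 3 ^ finrank ℝ E / (finrank ℝ E - (a + ε))
  have hK₁ : 0 < K₁ := by positivity
  refine ⟨max K₁ K₂, lt_max_of_lt_left hK₁, fun c r hr => ?_⟩
  rcases le_or_gt r ((1 + ‖c‖) / 2) with hrc | hrc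
  · calc _ ≤ K₁ * radialWeight a q (‖c‖ + r) :=
          toReal_inv_mul_setIntegral_radialWeight_le_of_le μ ha hq₁ hr hrc
      _ ≤ max K₁ K₂ * ⨅ y : ball c r, radialWeight a q ‖(y : E)‖ :=
          mul_le_mul (le_max_left _ _) (radialWeight_le_iInf_ball ha hq₀ hr le_rfl)
            (radialWeight_pos (by positivity)).le (hK₁.le.trans (le_max_left _ _))
  · calc _ ≤ K₂ * radialWeight a q (3 * r) :=
          toReal_inv_mul_setIntegral_radialWeight_le_of_lt μ ha hq₀ hq₁ hε haε hrc
      _ ≤ max K₁ K₂ * ⨅ y : ball c r, radialWeight a q ‖(y : E)‖ :=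
          mul_le_mul (le_max_right _ _) (radialWeight_le_iInf_ball ha hq₀ hr (by linarith))
            (radialWeight_pos (by positivity)).le (hK₁.le.trans (le_max_left _ _))

end AddHaar

lemma exists_Wp_eq_radialWeight {n : ℕ} (hn : 1 ≤ n) {p : ℝ} (hp₀ : 0 < p) (hp₁ : p ≤ 1) :
    ∃ a q : ℝ, 0 ≤ a ∧ a < n ∧ 0 ≤ q ∧ q ≤ 1 ∧ Wp n p = fun x => radialWeight a q ‖x‖ := by
  have hn' : (1 : ℝ) ≤ n := by exact_mod_cast hn
  by_cases hp : p = 1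
  · refine ⟨0, 1, le_rfl, by linarith, zero_le_one, le_rfl, funext fun x => ?_⟩
    simp [Wp, radialWeight, hp, rpow_neg_one]
  by_cases hk : ∃ k : ℕ, (n : ℝ) * (1 / p - 1) = k
  · refine ⟨n * (1 - p), p, by nlinarith, by nlinarith, hp₀.le, hp₁, funext fun x => ?_⟩
    simp only [Wp, radialWeight, if_neg hp, if_pos hk, neg_mul]
  · refine ⟨n * (1 - p), 0, by nlinarith, by nlinarith, le_rfl, zero_le_one, funext fun x => ?_⟩
    simp only [Wp, radialWeight, if_neg hp, if_neg hk, neg_mul, neg_zero, rpow_zero, mul_one]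

/-- `W_p` is a Muckenhoupt `A_1(ℝⁿ)` weight. -/
theorem statement14 (n : ℕ) (hn : 1 ≤ n) (p : ℝ) (hp0 : 0 < p) (hp1 : p ≤ 1) :
    ∃ C : ℝ, 0 < C ∧ ∀ (c : Rn n) (r : ℝ), 0 < r →
      (volume (Metric.ball c r)).toReal⁻¹ * (∫ x in Metric.ball c r, Wp n p x) ≤
        C * ⨅ y : Metric.ball c r, Wp n p (y : Rn n) := by
  obtain ⟨a, q, ha, han, hq₀, hq₁, hW⟩ := exists_Wp_eq_radialWeight hn hp0 hp1
  rw [hW]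
  exact isA1Weight_radialWeight volume ha (by rwa [finrank_euclideanSpace_fin]) hq₀ hq₁
end
end

section
/- Let n ≥ 1 and p ∈ (0,1]. The function Φ_p satisfies the uniformly Muckenhoupt 𝔸_1(ℝ^n) condition: there exists a constant C > 0 such that for every t ∈ (0,∞) and every ball B ⊂ ℝ^n, (1/|B|) ∫_B Φ_p(x,t) dx ≤ C · inf_{x ∈ B} Φ_p(x,t), where |B| denotes the Lebesgue measure of B. -/
/-!
Write `Φ_p(x, t) = t / (L + a w(|x|))` with `L = log (e + t)`, `a = t^(1-p)` and
`w(s) = (1 + s)^α log (e + s)^β`, where `α = n(1-p) < n` and `0 ≤ β ≤ 1`. As `w` increases, the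
infimum of `Φ_p(·, t)` over `B(c, r)` is at least its value at radius `R = |c| + r`. As the
logarithm grows slower than any power, `s ↦ (1 + s)^(α+γ) Φ_p(s, t)` is almost increasing for
every `γ > 0`, with a constant independent of `t`; hence, with `σ = α + γ`,
`Φ_p(x, t) ≲ Φ_p(R, t) (1 + R)^σ (1 + |x|)^(-σ)` on the ball. Choosing `σ < n`, the weight
`(1 + |x|)^(-σ)` has ball averages `≲ (1 + |c| + r)^(-σ)`: on a ball of radius `r ≤ (1 + |c|)/2`
it is almost constant, and a larger ball lies in `B(0, 3r)`, where polar coordinates integrate it.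
-/

open MeasureTheory Real
open scoped ENNReal Classical

noncomputable section

open Metric Set Module

theorem setIntegral_Ioo_pow_mul_one_add_rpow_neg_le {d : ℕ} {s ρ : ℝ} (hd : 1 ≤ d) (hs : 0 ≤ s)
    (hsd : s < d) (hρ : 0 ≤ ρ) :
    ∫ y in Ioo 0 ρ, y ^ (d - 1) * (1 + y) ^ (-s) ≤ ρ ^ ((d : ℝ) - s) / (d - s) := by
  have hexp : (-1 : ℝ) < d - 1 - s := by linarith
  have hpow : ∫ y in Ioo 0 ρ, y ^ ((d : ℝ) - 1 - s) = ρ ^ ((d : ℝ) - s) / (d - s) := by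
    rw [← integral_Ioc_eq_integral_Ioo, ← intervalIntegral.integral_of_le hρ,
      integral_rpow (Or.inl hexp), zero_rpow (by linarith)]
    ring_nf
  rw [← hpow]
  refine setIntegral_mono_of_nonneg (fun y hy => ?_) (fun y hy => ?_)
    ((intervalIntegral.intervalIntegrable_rpow' hexp).1.mono_set Ioo_subset_Ioc_self)
  · exact mul_nonneg (pow_nonneg hy.1.le _) (rpow_nonneg (by linarith [hy.1]) _)
  · calc y ^ (d - 1) * (1 + y) ^ (-s) ≤ y ^ ((d - 1 : ℕ) : ℝ) * y ^ (-s) := by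
          rw [rpow_natCast]
          exact mul_le_mul_of_nonneg_left (rpow_le_rpow_of_nonpos hy.1 (by linarith) (by linarith))
            (pow_nonneg hy.1.le _)
      _ = y ^ ((d : ℝ) - 1 - s) := by
          rw [← rpow_add hy.1, Nat.cast_sub hd]
          ring_nf

theorem one_add_norm_rpow_neg_le_of_mem_ball {E : Type*} [SeminormedAddCommGroup E] {s r : ℝ}
    (hs : 0 ≤ s) {c x : E} (hx : x ∈ ball c r) (hr : 2 * r ≤ 1 + ‖c‖) :
    (1 + ‖x‖) ^ (-s) ≤ 3 ^ s * (1 + ‖c‖ + r) ^ (-s) := by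
  have hR : 0 < 1 + ‖c‖ + r := by
    linarith [norm_nonneg c, norm_nonneg (x - c), mem_ball_iff_norm.1 hx]
  calc (1 + ‖x‖) ^ (-s) ≤ ((1 + ‖c‖ + r) / 3) ^ (-s) := by
        refine rpow_le_rpow_of_nonpos (by positivity) ?_ (by linarith)
        linarith [mem_ball_iff_norm'.1 hx, norm_sub_norm_le c x]
    _ = 3 ^ s * (1 + ‖c‖ + r) ^ (-s) := by
        rw [div_rpow hR.le (by norm_num), rpow_neg (by norm_num : (0 : ℝ) ≤ 3), div_inv_eq_mul,
          mul_comm]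

section Radial

variable {E : Type*} [NormedAddCommGroup E] [NormedSpace ℝ E] [FiniteDimensional ℝ E]
  [MeasurableSpace E] [BorelSpace E] (μ : Measure E) [μ.IsAddHaarMeasure]

theorem integrableOn_one_add_norm_rpow_neg (s : ℝ) (c : E) (r : ℝ) :
    IntegrableOn (fun x : E => (1 + ‖x‖) ^ (-s)) (ball c r) μ :=
  (((continuous_const.add continuous_norm).rpow_const fun x => Or.inl (by dsimp; positivity)
    ).continuousOn.integrableOn_compact (isCompact_closedBall c r)).mono_set ball_subset_closedBall

variable [Nontrivial E]

theorem setIntegral_ball_zero_comp_norm (f : ℝ → ℝ) (ρ : ℝ) :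
    ∫ x in ball (0 : E) ρ, f ‖x‖ ∂μ =
      finrank ℝ E * μ.real (ball 0 1) * ∫ y in Ioo 0 ρ, y ^ (finrank ℝ E - 1) * f y := by
  have hind : (ball (0 : E) ρ).indicator (fun x => f ‖x‖) = fun x => (Iio ρ).indicator f ‖x‖ := by
    ext x
    by_cases hx : ‖x‖ < ρ <;> simp [indicator, hx]
  rw [← integral_indicator measurableSet_ball, hind, integral_fun_norm_addHaar μ,
    nsmul_eq_mul, smul_eq_mul, mul_assoc]
  congr 2
  rw [← Ioi_inter_Iio, ← setIntegral_indicator measurableSet_Iio]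
  congr 1 with y
  by_cases hy : y < ρ <;> simp [indicator, hy]

theorem addHaar_real_ball (x : E) {r : ℝ} (hr : 0 ≤ r) :
    μ.real (ball x r) = r ^ finrank ℝ E * μ.real (ball 0 1) := by
  rw [← Measure.addHaar_real_closedBall_eq_addHaar_real_ball,
    Measure.addHaar_real_closedBall μ x hr]

theorem setIntegral_ball_zero_one_add_norm_rpow_neg_le {s ρ : ℝ} (hs : 0 ≤ s)
    (hsd : s < finrank ℝ E) (hρ : 0 < ρ) :
    ∫ x in ball (0 : E) ρ, (1 + ‖x‖) ^ (-s) ∂μ ≤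
      finrank ℝ E / (finrank ℝ E - s) * μ.real (ball 0 ρ) * ρ ^ (-s) := by
  have hd : 0 < (finrank ℝ E : ℝ) - s := by linarith
  rw [setIntegral_ball_zero_comp_norm μ (fun y => (1 + y) ^ (-s)), addHaar_real_ball μ 0 hρ.le]
  calc (finrank ℝ E : ℝ) * μ.real (ball 0 1) *
        ∫ y in Ioo 0 ρ, y ^ (finrank ℝ E - 1) * (1 + y) ^ (-s)
      ≤ finrank ℝ E * μ.real (ball 0 1) * (ρ ^ ((finrank ℝ E : ℝ) - s) / (finrank ℝ E - s)) := by
        gcongr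
        exact setIntegral_Ioo_pow_mul_one_add_rpow_neg_le finrank_pos hs hsd hρ.le
    _ = _ := by
        rw [sub_eq_add_neg, rpow_add hρ, rpow_natCast]
        field_simp

theorem setIntegral_ball_one_add_norm_rpow_neg_le {s : ℝ} (hs : 0 ≤ s)
    (hsd : s < finrank ℝ E) (c : E) (r : ℝ) :
    ∫ x in ball c r, (1 + ‖x‖) ^ (-s) ∂μ ≤
      3 ^ finrank ℝ E * (finrank ℝ E / (finrank ℝ E - s)) * μ.real (ball c r) *
        (1 + ‖c‖ + r) ^ (-s) := by
  set C : ℝ := 3 ^ finrank ℝ E * (finrank ℝ E / (finrank ℝ E - s))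
  have hd : 0 < (finrank ℝ E : ℝ) - s := by linarith
  have h3C : (3 : ℝ) ^ s ≤ C := by
    calc (3 : ℝ) ^ s ≤ 3 ^ ((finrank ℝ E : ℕ) : ℝ) :=
          rpow_le_rpow_of_exponent_le (by norm_num) hsd.le
      _ ≤ C := by
        rw [rpow_natCast]
        refine le_mul_of_one_le_right (by positivity) ?_
        rw [one_le_div hd]
        linarith
  have hint := integrableOn_one_add_norm_rpow_neg μ s
  rcases le_or_gt r 0 with hr | hr
  · simp [ball_eq_empty.2 hr]
  have hR : 0 < 1 + ‖c‖ + r := by positivity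
  rcases le_or_gt (2 * r) (1 + ‖c‖) with hsmall | hlarge
  · calc ∫ x in ball c r, (1 + ‖x‖) ^ (-s) ∂μ
          ≤ ∫ x in ball c r, 3 ^ s * (1 + ‖c‖ + r) ^ (-s) ∂μ := by
          refine setIntegral_mono_on (hint c r) (integrableOn_const measure_ball_lt_top.ne)
            measurableSet_ball fun x hx => one_add_norm_rpow_neg_le_of_mem_ball hs hx hsmall
      _ = μ.real (ball c r) * (3 ^ s * (1 + ‖c‖ + r) ^ (-s)) := by
          rw [setIntegral_const, smul_eq_mul]
      _ ≤ C * μ.real (ball c r) * (1 + ‖c‖ + r) ^ (-s) := by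
        rw [mul_left_comm, ← mul_assoc]
        gcongr
  · have hsub : ball c r ⊆ ball (0 : E) (3 * r) := fun x hx => by
      rw [mem_ball_zero_iff]
      linarith [mem_ball_iff_norm.1 hx, norm_sub_norm_le x c]
    calc ∫ x in ball c r, (1 + ‖x‖) ^ (-s) ∂μ ≤ ∫ x in ball (0 : E) (3 * r), (1 + ‖x‖) ^ (-s) ∂μ :=
          setIntegral_mono_set (hint 0 (3 * r)) (.of_forall fun x => by positivity)
            hsub.eventuallyLE
      _ ≤ finrank ℝ E / (finrank ℝ E - s) * μ.real (ball (0 : E) (3 * r)) * (3 * r) ^ (-s) :=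
          setIntegral_ball_zero_one_add_norm_rpow_neg_le μ hs hsd (by positivity)
      _ = C * μ.real (ball c r) * (3 * r) ^ (-s) := by
          rw [addHaar_real_ball μ _ hr.le, addHaar_real_ball μ _ (by positivity), mul_pow]
          ring
      _ ≤ C * μ.real (ball c r) * (1 + ‖c‖ + r) ^ (-s) := by
          refine mul_le_mul_of_nonneg_left ?_ (by positivity)
          exact rpow_le_rpow_of_nonpos hR (by linarith) (by linarith)

theorem setIntegral_ball_comp_norm_le {f : ℝ → ℝ} {s K : ℝ} (hs : 0 ≤ s)
    (hsd : s < finrank ℝ E) (hf₀ : ∀ u, 0 ≤ u → 0 ≤ f u)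
    (hf : ∀ u v, 0 ≤ u → u ≤ v → (1 + u) ^ s * f u ≤ K * ((1 + v) ^ s * f v)) (c : E) (r : ℝ) :
    ∫ x in ball c r, f ‖x‖ ∂μ ≤
      K * (3 ^ finrank ℝ E * (finrank ℝ E / (finrank ℝ E - s))) * μ.real (ball c r) *
        f (‖c‖ + r) := by
  rcases le_or_gt r 0 with hr | hr
  · simp [ball_eq_empty.2 hr]
  have hR : 0 < 1 + ‖c‖ + r := by positivity
  set M := K * ((1 + (‖c‖ + r)) ^ s * f (‖c‖ + r))
  have hM : 0 ≤ M := (mul_nonneg (by positivity) (hf₀ _ (by positivity))).trans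
    (hf _ _ (by positivity) le_rfl)
  have hpt : ∀ x ∈ ball c r, f ‖x‖ ≤ M * (1 + ‖x‖) ^ (-s) := fun x hx => by
    have hxR : ‖x‖ ≤ ‖c‖ + r := by linarith [mem_ball_iff_norm.1 hx, norm_sub_norm_le x c]
    rw [rpow_neg (by positivity), ← div_eq_mul_inv, le_div_iff₀ (by positivity), mul_comm]
    exact hf _ _ (norm_nonneg x) hxR
  calc ∫ x in ball c r, f ‖x‖ ∂μ ≤ ∫ x in ball c r, M * (1 + ‖x‖) ^ (-s) ∂μ :=
        setIntegral_mono_of_nonneg (fun x _ => hf₀ _ (norm_nonneg x)) hpt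
          ((integrableOn_one_add_norm_rpow_neg μ s c r).const_mul M)
    _ = M * ∫ x in ball c r, (1 + ‖x‖) ^ (-s) ∂μ := integral_const_mul M _
    _ ≤ M * (3 ^ finrank ℝ E * (finrank ℝ E / (finrank ℝ E - s)) * μ.real (ball c r) *
          (1 + ‖c‖ + r) ^ (-s)) :=
        mul_le_mul_of_nonneg_left (setIntegral_ball_one_add_norm_rpow_neg_le μ hs hsd c r) hM
    _ = _ := by
        rw [rpow_neg hR.le, add_assoc]
        field_simp
        ring

end Radial

theorem one_le_log_exp_add {s : ℝ} (hs : 0 ≤ s) : 1 ≤ log (exp 1 + s) := by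
  calc (1 : ℝ) = log (exp 1) := (log_exp 1).symm
    _ ≤ _ := log_le_log (exp_pos 1) (by linarith)

theorem log_exp_add_le {γ s R : ℝ} (hγ : 0 < γ) (hs : 0 ≤ s) (hsR : s ≤ R) :
    log (exp 1 + R) ≤ (1 + 1 / γ) * ((1 + R) / (1 + s)) ^ γ * log (exp 1 + s) := by
  set u := (1 + R) / (1 + s)
  have hu : 1 ≤ u := (one_le_div (by positivity)).2 (by linarith)
  have huγ : 1 ≤ u ^ γ := one_le_rpow hu hγ.le
  have hℓ := one_le_log_exp_add hs
  have hsplit : log (exp 1 + R) ≤ log (exp 1 + s) + log u := by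
    have := exp_pos 1
    rw [← log_mul (by positivity) (by positivity)]
    refine log_le_log (by linarith) ?_
    rw [mul_div_assoc', le_div_iff₀ (by positivity)]
    -- `(e + s)(1 + R) - (e + R)(1 + s) = (e - 1)(R - s) ≥ 0`
    nlinarith [add_one_le_exp 1]
  have hlog : log u ≤ u ^ γ / γ := log_le_rpow_div (by linarith) hγ
  calc log (exp 1 + R) ≤ log (exp 1 + s) + u ^ γ / γ := by linarith
    _ ≤ u ^ γ * log (exp 1 + s) + 1 / γ * u ^ γ * log (exp 1 + s) := by
        gcongr
        · exact le_mul_of_one_le_left (by positivity) huγ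
        · rw [div_eq_mul_one_div, mul_comm]
          exact le_mul_of_one_le_right (by positivity) hℓ
    _ = (1 + 1 / γ) * u ^ γ * log (exp 1 + s) := by ring

theorem rpow_log_exp_add_mul_le {β γ s R : ℝ} (hβ₀ : 0 ≤ β) (hβ₁ : β ≤ 1) (hγ : 0 < γ)
    (hs : 0 ≤ s) (hsR : s ≤ R) :
    log (exp 1 + R) ^ β * (1 + s) ^ γ ≤ (1 + 1 / γ) * (1 + R) ^ γ * log (exp 1 + s) ^ β := by
  set M := (1 + 1 / γ) * ((1 + R) / (1 + s)) ^ γ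
  have hM : 1 ≤ M := one_le_mul_of_one_le_of_one_le (by simp [hγ.le])
    (one_le_rpow ((one_le_div (by positivity)).2 (by linarith)) hγ.le)
  have hℓ := one_le_log_exp_add hs
  calc log (exp 1 + R) ^ β * (1 + s) ^ γ ≤ (M * log (exp 1 + s)) ^ β * (1 + s) ^ γ := by
        gcongr
        · linarith [one_le_log_exp_add (hs.trans hsR)]
        · exact log_exp_add_le hγ hs hsR
    _ = M ^ β * log (exp 1 + s) ^ β * (1 + s) ^ γ := by
        rw [mul_rpow (by linarith) (by linarith)]
    _ ≤ M * log (exp 1 + s) ^ β * (1 + s) ^ γ := by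
        gcongr
        exact rpow_le_self_of_one_le hM hβ₁
    _ = _ := by
        simp only [M]
        rw [div_rpow (by linarith) (by positivity)]
        field_simp

def logPowWeight (α β s : ℝ) : ℝ := (1 + s) ^ α * log (exp 1 + s) ^ β

section logPowWeight

variable {α β s u v : ℝ}

theorem logPowWeight_nonneg (hs : 0 ≤ s) : 0 ≤ logPowWeight α β s := by
  have := one_le_log_exp_add hs
  unfold logPowWeight
  positivity

theorem logPowWeight_le_logPowWeight (hα : 0 ≤ α) (hβ : 0 ≤ β) (hu : 0 ≤ u) (huv : u ≤ v) :
    logPowWeight α β u ≤ logPowWeight α β v := by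
  have := one_le_log_exp_add hu
  exact mul_le_mul (rpow_le_rpow (by linarith) (by linarith) hα)
    (rpow_le_rpow (by linarith) (log_le_log (by positivity) (by linarith)) hβ) (by positivity)
    (rpow_nonneg (by linarith) α)

theorem logPowWeight_mul_le {γ : ℝ} (hβ₀ : 0 ≤ β) (hβ₁ : β ≤ 1) (hγ : 0 < γ) (hu : 0 ≤ u)
    (huv : u ≤ v) :
    logPowWeight α β v * (1 + u) ^ (α + γ) ≤
      (1 + 1 / γ) * (1 + v) ^ (α + γ) * logPowWeight α β u := by
  have hv : 0 ≤ v := hu.trans huv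
  unfold logPowWeight
  rw [rpow_add (by linarith), rpow_add (by linarith)]
  calc (1 + v) ^ α * log (exp 1 + v) ^ β * ((1 + u) ^ α * (1 + u) ^ γ)
      = ((1 + v) ^ α * (1 + u) ^ α) * (log (exp 1 + v) ^ β * (1 + u) ^ γ) := by ring
    _ ≤ ((1 + v) ^ α * (1 + u) ^ α) * ((1 + 1 / γ) * (1 + v) ^ γ * log (exp 1 + u) ^ β) :=
        mul_le_mul_of_nonneg_left (rpow_log_exp_add_mul_le hβ₀ hβ₁ hγ hu huv) (by positivity)
    _ = _ := by ring

theorem one_add_rpow_mul_div_add_logPowWeight_le {γ L a t : ℝ} (hα : 0 ≤ α) (hβ₀ : 0 ≤ β)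
    (hβ₁ : β ≤ 1) (hγ : 0 < γ) (hL : 0 < L) (ha : 0 ≤ a) (ht : 0 ≤ t) (hu : 0 ≤ u) (huv : u ≤ v) :
    (1 + u) ^ (α + γ) * (t / (L + a * logPowWeight α β u)) ≤
      (1 + 1 / γ) * ((1 + v) ^ (α + γ) * (t / (L + a * logPowWeight α β v))) := by
  have hv : 0 ≤ v := hu.trans huv
  have hDu : 0 < L + a * logPowWeight α β u := by
    have := logPowWeight_nonneg (α := α) (β := β) hu
    positivity
  have hDv : 0 < L + a * logPowWeight α β v := by
    have := logPowWeight_nonneg (α := α) (β := β) hv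
    positivity
  have hK : 1 ≤ 1 + 1 / γ := by simp [hγ.le]
  have hpow : (1 + u) ^ (α + γ) ≤ (1 + v) ^ (α + γ) :=
    rpow_le_rpow (by positivity) (by linarith) (by positivity)
  have key : (1 + u) ^ (α + γ) * (L + a * logPowWeight α β v) ≤
      (1 + 1 / γ) * (1 + v) ^ (α + γ) * (L + a * logPowWeight α β u) := by
    calc (1 + u) ^ (α + γ) * (L + a * logPowWeight α β v)
        = L * (1 + u) ^ (α + γ) + a * (logPowWeight α β v * (1 + u) ^ (α + γ)) := by ring
      _ ≤ L * ((1 + 1 / γ) * (1 + v) ^ (α + γ)) +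
          a * ((1 + 1 / γ) * (1 + v) ^ (α + γ) * logPowWeight α β u) := by
        refine add_le_add (mul_le_mul_of_nonneg_left ?_ hL.le)
          (mul_le_mul_of_nonneg_left (logPowWeight_mul_le hβ₀ hβ₁ hγ hu huv) ha)
        exact hpow.trans (le_mul_of_one_le_left (by positivity) hK)
      _ = _ := by ring
  rw [← mul_div_assoc, ← mul_div_assoc, ← mul_div_assoc, div_le_div_iff₀ hDu hDv]
  calc (1 + u) ^ (α + γ) * t * (L + a * logPowWeight α β v)
      = t * ((1 + u) ^ (α + γ) * (L + a * logPowWeight α β v)) := by ring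
    _ ≤ t * ((1 + 1 / γ) * (1 + v) ^ (α + γ) * (L + a * logPowWeight α β u)) := by gcongr
    _ = _ := by ring

end logPowWeight

def logExponent (n : ℕ) (p : ℝ) : ℝ := if ∃ k : ℕ, (n : ℝ) * (1 / p - 1) = k then p else 0

theorem logExponent_nonneg {n : ℕ} {p : ℝ} (hp : 0 ≤ p) : 0 ≤ logExponent n p := by
  unfold logExponent
  split_ifs <;> simp [hp]

theorem logExponent_le_one {n : ℕ} {p : ℝ} (hp : p ≤ 1) : logExponent n p ≤ 1 := by
  unfold logExponent
  split_ifs <;> simp [hp]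

def phiRadial (n : ℕ) (p s t : ℝ) : ℝ :=
  t / (log (exp 1 + t) + t ^ (1 - p) * logPowWeight (n * (1 - p)) (logExponent n p) s)

theorem Phi_eq_phiRadial {n : ℕ} {p t : ℝ} (ht : 0 ≤ t) (x : Rn n) :
    Phi n p x t = phiRadial n p ‖x‖ t := by
  have hsplit : (t * (1 + ‖x‖) ^ (n : ℝ)) ^ (1 - p) =
      t ^ (1 - p) * (1 + ‖x‖) ^ ((n : ℝ) * (1 - p)) := by
    rw [mul_rpow ht (by positivity), ← rpow_mul (by positivity)]
  unfold Phi phiRadial logExponent logPowWeight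
  split_ifs <;> simp only [hsplit, mul_assoc, rpow_zero, mul_one]

section phiRadial

variable {n : ℕ} {p s t u v : ℝ}

theorem phiRadial_nonneg (ht : 0 ≤ t) (hs : 0 ≤ s) : 0 ≤ phiRadial n p s t := by
  have := one_le_log_exp_add ht
  have := logPowWeight_nonneg (α := n * (1 - p)) (β := logExponent n p) hs
  unfold phiRadial
  positivity

theorem phiRadial_le_phiRadial (hp₀ : 0 ≤ p) (hp₁ : p ≤ 1) (ht : 0 ≤ t) (hu : 0 ≤ u)
    (huv : u ≤ v) : phiRadial n p v t ≤ phiRadial n p u t := by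
  have := one_le_log_exp_add ht
  have := logPowWeight_nonneg (α := n * (1 - p)) (β := logExponent n p) hu
  have := logPowWeight_le_logPowWeight (mul_nonneg n.cast_nonneg (sub_nonneg.2 hp₁))
    (logExponent_nonneg (n := n) hp₀) hu huv
  exact div_le_div_of_nonneg_left ht (by positivity) (by gcongr)

theorem phiRadial_le_iInf_Phi (hp₀ : 0 ≤ p) (hp₁ : p ≤ 1) (ht : 0 ≤ t) (c : Rn n) {r : ℝ}
    (hr : 0 < r) : phiRadial n p (‖c‖ + r) t ≤ ⨅ x : ball c r, Phi n p x t := by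
  have : Nonempty (ball c r) := (nonempty_ball.2 hr).to_subtype
  refine le_ciInf fun x => ?_
  rw [Phi_eq_phiRadial ht]
  exact phiRadial_le_phiRadial hp₀ hp₁ ht (norm_nonneg _)
    (by linarith [mem_ball_iff_norm.1 x.2, norm_sub_norm_le (x : Rn n) c])

end phiRadial

theorem exists_setIntegral_ball_Phi_le {n : ℕ} {p : ℝ} (hn : 1 ≤ n) (hp₀ : 0 < p) (hp₁ : p ≤ 1) :
    ∃ C > 0, ∀ t, 0 < t → ∀ (c : Rn n) (r : ℝ),
      ∫ x in ball c r, Phi n p x t ≤ C * volume.real (ball c r) * phiRadial n p (‖c‖ + r) t := by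
  have : Nonempty (Fin n) := Fin.pos_iff_nonempty.mp hn
  have hn₀ : (0 : ℝ) < n := by exact_mod_cast hn
  have hdim : finrank ℝ (Rn n) = n := finrank_euclideanSpace_fin
  set α : ℝ := n * (1 - p)
  -- any `γ` with `0 < γ` and `α + γ < n` would do
  set γ : ℝ := n * p / 2
  have hα : 0 ≤ α := mul_nonneg n.cast_nonneg (by linarith)
  have hγ : 0 < γ := by positivity
  have hσ : α + γ < finrank ℝ (Rn n) := by
    rw [hdim]
    simp only [α, γ]
    nlinarith
  refine ⟨(1 + 1 / γ) * (3 ^ n * (n / (n - (α + γ)))), ?_, fun t ht c r => ?_⟩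
  · have := sub_pos.2 (hdim ▸ hσ)
    positivity
  have hL : 0 < log (exp 1 + t) := one_pos.trans_le (one_le_log_exp_add ht.le)
  have h := setIntegral_ball_comp_norm_le volume (add_nonneg hα hγ.le) hσ
    (fun u hu => phiRadial_nonneg ht.le hu)
    (fun u v hu huv => one_add_rpow_mul_div_add_logPowWeight_le hα (logExponent_nonneg hp₀.le)
      (logExponent_le_one hp₁) hγ hL (by positivity) ht.le hu huv) c r
  simpa only [Phi_eq_phiRadial ht.le, hdim] using h

/-- `Φ_p` satisfies the uniformly Muckenhoupt `𝔸₁(ℝⁿ)` condition. -/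
theorem statement16 (n : ℕ) (hn : 1 ≤ n) (p : ℝ) (hp0 : 0 < p) (hp1 : p ≤ 1) :
    ∃ C : ℝ, 0 < C ∧ ∀ (t : ℝ), 0 < t → ∀ (c : Rn n) (r : ℝ), 0 < r →
      (volume (Metric.ball c r)).toReal⁻¹ * (∫ x in Metric.ball c r, Phi n p x t) ≤
        C * ⨅ x : Metric.ball c r, Phi n p (x : Rn n) t := by
  obtain ⟨C, hC, hint⟩ := exists_setIntegral_ball_Phi_le hn hp0 hp1
  refine ⟨C, hC, fun t ht c r hr => ?_⟩
  have hvol : 0 < volume.real (ball c r) :=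
    ENNReal.toReal_pos (measure_ball_pos volume c hr).ne' measure_ball_lt_top.ne
  rw [← measureReal_def, inv_mul_le_iff₀ hvol]
  calc ∫ x in ball c r, Phi n p x t
      ≤ C * volume.real (ball c r) * phiRadial n p (‖c‖ + r) t := hint t ht c r
    _ ≤ volume.real (ball c r) * (C * ⨅ x : ball c r, Phi n p x t) := by
      rw [mul_comm C, mul_assoc]
      gcongr
      exact phiRadial_le_iInf_Phi hp0.le hp1 ht.le c hr
end
end
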